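/- arXiv:2402.17857 — 10 statements merged into one kernel-verified Lean document; each statement's English description precedes it below -/
import Mathlib

section
/- Let H be a graph and R ⊆ V(H) an independent set of H. Suppose H₁ is a proper induced subgraph of H containing R, and let H₂ := H with the edges of H₁ removed. Then the maximum rooted density satisfies m(H,R) ≤ max{ m(H₁,R), m(H₂,V(H₁)) }. -/
open Finset

variable {V : Type} [Fintype V]

/-- The maximum rooted density `m(H,R)` of a graph `H` at a root set `R`:
the supremum of `e(H') / |V(H') \ R|` over subgraphs `H'` of `H` with
`V(H') \ R` nonempty. -/
noncomputable def rootedDensity (H : SimpleGraph V) (R : Set V) : ℝ :=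
  sSup {x : ℝ | ∃ H' : H.Subgraph, (H'.verts \ R).Nonempty ∧
    x = (H'.edgeSet.ncard : ℝ) / ((H'.verts \ R).ncard : ℝ)}

/-- The induced subgraph of `H` on a vertex subset `S` (as a graph on the same
vertex type, with vertices outside `S` isolated). -/
def inducedOn (H : SimpleGraph V) (S : Set V) : SimpleGraph V where
  Adj u v := H.Adj u v ∧ u ∈ S ∧ v ∈ S
  symm := ⟨fun u v h => ⟨h.1.symm, h.2.2, h.2.1⟩⟩
  loopless := ⟨fun u h => H.loopless.irrefl u h.1⟩

/-- The graph `H` with all edges inside `S` removed. -/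
def removeWithin (H : SimpleGraph V) (S : Set V) : SimpleGraph V where
  Adj u v := H.Adj u v ∧ ¬(u ∈ S ∧ v ∈ S)
  symm := ⟨fun u v h => ⟨h.1.symm, fun hc => h.2 ⟨hc.2, hc.1⟩⟩⟩
  loopless := ⟨fun u h => H.loopless.irrefl u h.1⟩

/-!
Split a subgraph `H'` of `H` into its edges inside `S` (a subgraph of `H₁`) and its remaining
edges (a subgraph of `H₂`), and its unrooted vertices into those in `S \ R` and those outside `S`.
A piece all of whose vertices are roots carries no edge, since `R` is independent in `H₁` and
`S` is independent in `H₂`; hence `e(H₁') ≤ m(H₁,R) |V(H₁') \ R|` and `e(H₂') ≤ m(H₂,S) |V(H₂') \ S|`,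
and adding these bounds `e(H')` by `max (m(H₁,R), m(H₂,S)) |V(H') \ R|`.
-/

namespace SimpleGraph

section RootedDensity

variable {G : SimpleGraph V} {T : Set V}

lemma rootedDensity_nonneg : 0 ≤ rootedDensity G T := by
  refine Real.sSup_nonneg ?_
  rintro x ⟨H', -, rfl⟩
  positivity

lemma div_le_rootedDensity (H' : G.Subgraph) (hne : (H'.verts \ T).Nonempty) :
    (H'.edgeSet.ncard : ℝ) / (H'.verts \ T).ncard ≤ rootedDensity G T := by
  refine le_csSup ⟨Fintype.card (Sym2 V), ?_⟩ ⟨H', hne, rfl⟩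
  rintro x ⟨H'', hne', rfl⟩
  have hverts : (1 : ℝ) ≤ (H''.verts \ T).ncard := by
    exact_mod_cast (Set.ncard_pos).2 hne'
  have hedges : (H''.edgeSet.ncard : ℝ) ≤ Fintype.card (Sym2 V) := by
    have := Set.ncard_le_ncard (Set.subset_univ H''.edgeSet)
    rw [Set.ncard_univ, Nat.card_eq_fintype_card] at this
    exact_mod_cast this
  exact (div_le_self (by positivity) hverts).trans hedges

lemma ncard_edgeSet_le_rootedDensity_mul (hT : ∀ u ∈ T, ∀ v ∈ T, ¬G.Adj u v)
    (H' : G.Subgraph) :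
    (H'.edgeSet.ncard : ℝ) ≤ rootedDensity G T * (H'.verts \ T).ncard := by
  rcases (H'.verts \ T).eq_empty_or_nonempty with hempty | hne
  · have hsub : H'.verts ⊆ T := Set.sdiff_eq_empty.1 hempty
    have hno_edges : H'.edgeSet = ∅ := by
      refine Set.eq_empty_of_forall_notMem fun e he ↦ ?_
      induction e using Sym2.ind with
      | _ u v =>
        exact hT u (hsub (H'.edge_vert he)) v (hsub (H'.edge_vert he.symm)) (H'.adj_sub he)
    rw [hno_edges, Set.ncard_empty, Nat.cast_zero]
    exact mul_nonneg rootedDensity_nonneg (Nat.cast_nonneg _)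
  · have hpos : (0 : ℝ) < (H'.verts \ T).ncard := by exact_mod_cast (Set.ncard_pos).2 hne
    exact (div_le_iff₀ hpos).1 (div_le_rootedDensity H' hne)

lemma rootedDensity_le {c : ℝ} (hc : 0 ≤ c)
    (h : ∀ H' : G.Subgraph, (H'.verts \ T).Nonempty →
      (H'.edgeSet.ncard : ℝ) ≤ c * (H'.verts \ T).ncard) :
    rootedDensity G T ≤ c := by
  refine Real.sSup_le ?_ hc
  rintro x ⟨H', hne, rfl⟩
  have hpos : (0 : ℝ) < (H'.verts \ T).ncard := by exact_mod_cast (Set.ncard_pos).2 hne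
  exact (div_le_iff₀ hpos).2 (h H' hne)

end RootedDensity

namespace Subgraph

variable {H : SimpleGraph V}

def toInducedOn (H' : H.Subgraph) (S : Set V) : (inducedOn H S).Subgraph where
  verts := H'.verts ∩ S
  Adj u v := H'.Adj u v ∧ u ∈ S ∧ v ∈ S
  adj_sub h := ⟨H'.adj_sub h.1, h.2⟩
  edge_vert h := ⟨H'.edge_vert h.1, h.2.1⟩
  symm := ⟨fun _ _ h ↦ ⟨h.1.symm, h.2.2, h.2.1⟩⟩

def toRemoveWithin (H' : H.Subgraph) (S : Set V) : (removeWithin H S).Subgraph where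
  verts := H'.verts
  Adj u v := H'.Adj u v ∧ ¬(u ∈ S ∧ v ∈ S)
  adj_sub h := ⟨H'.adj_sub h.1, h.2⟩
  edge_vert h := H'.edge_vert h.1
  symm := ⟨fun _ _ h ↦ ⟨h.1.symm, fun hS ↦ h.2 ⟨hS.2, hS.1⟩⟩⟩

lemma edgeSet_toInducedOn (H' : H.Subgraph) (S : Set V) :
    (H'.toInducedOn S).edgeSet = H'.edgeSet ∩ S.sym2 := by
  ext e
  induction e using Sym2.ind with
  | _ u v =>
    simp only [Set.mem_inter_iff, Set.mk_mem_sym2_iff]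
    rfl

lemma edgeSet_toRemoveWithin (H' : H.Subgraph) (S : Set V) :
    (H'.toRemoveWithin S).edgeSet = H'.edgeSet \ S.sym2 := by
  ext e
  induction e using Sym2.ind with
  | _ u v =>
    simp only [Set.mem_sdiff, Set.mk_mem_sym2_iff]
    rfl

lemma ncard_edgeSet_eq_add (H' : H.Subgraph) (S : Set V) :
    H'.edgeSet.ncard =
      (H'.toInducedOn S).edgeSet.ncard + (H'.toRemoveWithin S).edgeSet.ncard := by
  rw [edgeSet_toInducedOn, edgeSet_toRemoveWithin, Set.ncard_inter_add_ncard_sdiff_eq_ncard]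

lemma ncard_verts_diff_eq_add (H' : H.Subgraph) {R S : Set V} (hRS : R ⊆ S) :
    (H'.verts \ R).ncard =
      ((H'.toInducedOn S).verts \ R).ncard + ((H'.toRemoveWithin S).verts \ S).ncard := by
  have hinter : (H'.verts \ R) ∩ S = (H'.verts ∩ S) \ R := Set.inter_sdiff_right_comm.symm
  have hdiff : (H'.verts \ R) \ S = H'.verts \ S := by
    rw [Set.sdiff_sdiff, Set.union_eq_right.2 hRS]
  rw [← Set.ncard_inter_add_ncard_sdiff_eq_ncard (H'.verts \ R) S, hinter, hdiff]
  rfl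

end Subgraph

end SimpleGraph

open SimpleGraph in
theorem rootedDensity_concatenate_general (H : SimpleGraph V) (R S : Set V)
    (hindep : ∀ u ∈ R, ∀ v ∈ R, ¬H.Adj u v)
    (hRS : R ⊆ S) :
    rootedDensity H R ≤
      max (rootedDensity (inducedOn H S) R) (rootedDensity (removeWithin H S) S) := by
  set m₁ := rootedDensity (inducedOn H S) R
  set m₂ := rootedDensity (removeWithin H S) S
  have hR : ∀ u ∈ R, ∀ v ∈ R, ¬(inducedOn H S).Adj u v := fun u hu v hv h ↦ hindep u hu v hv h.1
  have hS : ∀ u ∈ S, ∀ v ∈ S, ¬(removeWithin H S).Adj u v := fun u hu v hv h ↦ h.2 ⟨hu, hv⟩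
  refine rootedDensity_le (rootedDensity_nonneg.trans (le_max_left _ _)) fun H' _ ↦ ?_
  have h₁ := ncard_edgeSet_le_rootedDensity_mul hR (H'.toInducedOn S)
  have h₂ := ncard_edgeSet_le_rootedDensity_mul hS (H'.toRemoveWithin S)
  have hm₁ : m₁ * ((H'.toInducedOn S).verts \ R).ncard
      ≤ max m₁ m₂ * ((H'.toInducedOn S).verts \ R).ncard := by gcongr; exact le_max_left _ _
  have hm₂ : m₂ * ((H'.toRemoveWithin S).verts \ S).ncard
      ≤ max m₁ m₂ * ((H'.toRemoveWithin S).verts \ S).ncard := by gcongr; exact le_max_right _ _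
  rw [H'.ncard_edgeSet_eq_add S, H'.ncard_verts_diff_eq_add hRS]
  push_cast
  linarith

/-- If `R` is an independent set of `H`, `H₁` is a proper induced subgraph of `H`
(on vertex set `S`) containing `R`, and `H₂ = H` minus the edges of `H₁`, then
`m(H,R) ≤ max { m(H₁,R), m(H₂, V(H₁)) }`. -/
theorem rootedDensity_concatenate (H : SimpleGraph V) (R S : Set V)
    (hindep : ∀ u ∈ R, ∀ v ∈ R, ¬H.Adj u v)
    (hRS : R ⊆ S) (hproper : S ≠ Set.univ) :
    rootedDensity H R ≤
      max (rootedDensity (inducedOn H S) R) (rootedDensity (removeWithin H S) S) :=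
  rootedDensity_concatenate_general H R S hindep hRS
end

section
/- If the degeneracy of a graph H rooted at an independent set R ⊆ V(H) is at most d ≥ 1, then the maximum rooted 2-density satisfies m₂(H,R) ≤ d. -/
variable {V : Type} [Fintype V]

/-- The maximum 2-density `m₂(H)`. -/
noncomputable def density2 (H : SimpleGraph V) : ℝ :=
  sSup {x : ℝ | ∃ H' : H.Subgraph, 3 ≤ H'.verts.ncard ∧
    x = ((H'.edgeSet.ncard : ℝ) - 1) / ((H'.verts.ncard : ℝ) - 2)}

/-- The maximum rooted 2-density `m₂(H,R) := max { m(H,R), m₂(H) }`. -/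
noncomputable def rootedDensity2 (H : SimpleGraph V) (R : Set V) : ℝ :=
  max (rootedDensity H R) (density2 H)

/-- The degeneracy of `H` rooted at `U` is at most `d`: there is an ordering
(encoded by an injective labelling `σ` of the non-root vertices) such that each
non-root vertex has at most `d` neighbours among `U` and the earlier vertices. -/
def RootedDegeneracyLE (H : SimpleGraph V) (U : Set V) (d : ℕ) : Prop :=
  ∃ σ : V → ℕ, (∀ v w, v ∉ U → w ∉ U → σ v = σ w → v = w) ∧
    ∀ v, v ∉ U → ({w | H.Adj v w ∧ (w ∈ U ∨ σ w < σ v)} : Set V).ncard ≤ d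

/-!
Orient every edge of a subgraph `G ⊆ H` towards its endpoint that is not a root and comes later
in the degeneracy order; since `R` is independent, such an endpoint exists. Every non-root then
has in-degree at most `d`, so `e(G) ≤ d · |V(G) ∖ R|`, which bounds `m(H,R)`. For `m₂(H)` let
`r = |V(G) ∩ R|`. If `r ≥ 2` the same bound gives `e(G) ≤ d (v(G) - 2)`. If `r ≤ 1`, the first
two non-roots of `G` have in-degree at most `r` and `min(d, r + 1)`, and summing gives
`e(G) ≤ d (v(G) - 2) + 1`.
-/

lemma Finset.sum_le_add_add_card_sub_two_mul {ι : Type*} {s : Finset ι} {f : ι → ℕ} {d : ℕ}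
    {a b : ι} (ha : a ∈ s) (hb : b ∈ s) (hab : a ≠ b) (hf : ∀ i ∈ s, f i ≤ d) :
    ∑ i ∈ s, f i ≤ f a + f b + (s.card - 2) * d := by
  classical
  have hb' : b ∈ s.erase a := Finset.mem_erase.mpr ⟨hab.symm, hb⟩
  have hcard : ((s.erase a).erase b).card = s.card - 2 := by
    rw [Finset.card_erase_of_mem hb', Finset.card_erase_of_mem ha, Nat.sub_sub]
  rw [← Finset.add_sum_erase s f ha, ← Finset.add_sum_erase _ f hb', ← add_assoc, ← hcard]
  gcongr
  exact Finset.sum_le_card_nsmul _ _ _ fun i hi =>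
    hf i (Finset.mem_of_mem_erase (Finset.mem_of_mem_erase hi))

namespace SimpleGraph

variable {α : Type*}

def earlierNeighborSet (G : SimpleGraph α) (R : Set α) (σ : α → ℕ) (v : α) : Set α :=
  {w | G.Adj v w ∧ (w ∈ R ∨ σ w < σ v)}

variable {G H : SimpleGraph α} {R : Set α} {σ : α → ℕ}

lemma earlierNeighborSet_mono (h : G ≤ H) (v : α) :
    G.earlierNeighborSet R σ v ⊆ H.earlierNeighborSet R σ v :=
  fun _ hw => ⟨h hw.1, hw.2⟩

lemma Adj.mem_earlierNeighborSet_or (hR : ∀ u ∈ R, ∀ v ∈ R, ¬G.Adj u v) (hσ : Set.InjOn σ Rᶜ)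
    {v w : α} (h : G.Adj v w) :
    (v ∉ R ∧ w ∈ G.earlierNeighborSet R σ v) ∨ (w ∉ R ∧ v ∈ G.earlierNeighborSet R σ w) := by
  by_cases hv : v ∈ R
  · have hw : w ∉ R := fun hw => hR v hv w hw h
    exact Or.inr ⟨hw, h.symm, Or.inl hv⟩
  by_cases hw : w ∈ R
  · exact Or.inl ⟨hv, h, Or.inl hw⟩
  rcases lt_or_gt_of_ne fun hvw => h.ne (hσ hv hw hvw) with hlt | hlt
  · exact Or.inr ⟨hw, h.symm, Or.inr hlt⟩
  · exact Or.inl ⟨hv, h, Or.inr hlt⟩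

namespace Subgraph

open scoped Classical in
lemma ncard_edgeSet_le_sum_ncard_earlierNeighborSet [Fintype α] (G : H.Subgraph)
    (hR : ∀ u ∈ R, ∀ v ∈ R, ¬H.Adj u v) (hσ : Set.InjOn σ Rᶜ) :
    G.edgeSet.ncard ≤
      ∑ v ∈ (G.verts \ R).toFinset, (G.spanningCoe.earlierNeighborSet R σ v).ncard := by
  have hR' : ∀ u ∈ R, ∀ v ∈ R, ¬G.spanningCoe.Adj u v :=
    fun u hu v hv h => hR u hu v hv (G.spanningCoe_le h)
  calc G.edgeSet.ncard
      ≤ ((G.verts \ R).toFinset.biUnion fun v =>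
          (G.spanningCoe.earlierNeighborSet R σ v).toFinset.image fun w => s(v, w)).card := by
        rw [Set.ncard_eq_toFinset_card']
        refine Finset.card_le_card fun e he => ?_
        induction e using Sym2.ind with
        | _ v w =>
          rw [Set.mem_toFinset, Subgraph.mem_edgeSet] at he
          simp only [Finset.mem_biUnion, Finset.mem_image, Set.mem_toFinset, Set.mem_sdiff]
          rcases Adj.mem_earlierNeighborSet_or hR' hσ (G := G.spanningCoe) he with
            ⟨hv, hw⟩ | ⟨hw, hv⟩
          · exact ⟨v, ⟨he.fst_mem, hv⟩, w, hw, rfl⟩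
          · exact ⟨w, ⟨he.snd_mem, hw⟩, v, hv, Sym2.eq_swap⟩
    _ ≤ ∑ v ∈ (G.verts \ R).toFinset,
          ((G.spanningCoe.earlierNeighborSet R σ v).toFinset.image fun w => s(v, w)).card :=
        Finset.card_biUnion_le
    _ ≤ ∑ v ∈ (G.verts \ R).toFinset, (G.spanningCoe.earlierNeighborSet R σ v).ncard := by
        gcongr with v
        rw [Set.ncard_eq_toFinset_card']
        exact Finset.card_image_le

lemma earlierNeighborSet_subset_union (G : H.Subgraph) {v : α} {S : Set α}
    (hS : ∀ w ∈ G.verts \ R, σ w < σ v → w ∈ S) :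
    G.spanningCoe.earlierNeighborSet R σ v ⊆ (G.verts ∩ R) ∪ S := by
  rintro w ⟨hvw, hw⟩
  by_cases hwR : w ∈ R
  · exact Or.inl ⟨hvw.snd_mem, hwR⟩
  · exact Or.inr (hS w ⟨hvw.snd_mem, hwR⟩ (hw.resolve_left hwR))

variable [Fintype α] {d : ℕ}

lemma ncard_earlierNeighborSet_le (G : H.Subgraph) (v : α) :
    (G.spanningCoe.earlierNeighborSet R σ v).ncard ≤ (H.earlierNeighborSet R σ v).ncard :=
  Set.ncard_le_ncard (earlierNeighborSet_mono G.spanningCoe_le v)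

lemma ncard_earlierNeighborSet_le_ncard_add (G : H.Subgraph) {v : α} {S : Set α}
    (hS : ∀ w ∈ G.verts \ R, σ w < σ v → w ∈ S) :
    (G.spanningCoe.earlierNeighborSet R σ v).ncard ≤ (G.verts ∩ R).ncard + S.ncard :=
  (Set.ncard_le_ncard (earlierNeighborSet_subset_union G hS)).trans (Set.ncard_union_le _ _)

variable (hR : ∀ u ∈ R, ∀ v ∈ R, ¬H.Adj u v) (hσ : Set.InjOn σ Rᶜ)
  (hd : ∀ v ∉ R, (H.earlierNeighborSet R σ v).ncard ≤ d)
include hR hσ hd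

lemma ncard_edgeSet_le_mul (G : H.Subgraph) : G.edgeSet.ncard ≤ (G.verts \ R).ncard * d := by
  classical
  calc G.edgeSet.ncard
      ≤ ∑ v ∈ (G.verts \ R).toFinset, (G.spanningCoe.earlierNeighborSet R σ v).ncard :=
        ncard_edgeSet_le_sum_ncard_earlierNeighborSet G hR hσ
    _ ≤ (G.verts \ R).toFinset.card * d := by
        refine Finset.sum_le_card_nsmul _ _ _ fun v hv => ?_
        exact (ncard_earlierNeighborSet_le G v).trans (hd v (Set.mem_toFinset.mp hv).2)
    _ = (G.verts \ R).ncard * d := by rw [Set.ncard_eq_toFinset_card']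

lemma ncard_edgeSet_le_mul_sub_two_add_one (G : H.Subgraph) (hn : 3 ≤ G.verts.ncard) :
    G.edgeSet.ncard ≤ d * (G.verts.ncard - 2) + 1 := by
  classical
  have hcard : (G.verts ∩ R).ncard + (G.verts \ R).ncard = G.verts.ncard :=
    Set.ncard_inter_add_ncard_sdiff_eq_ncard _ _
  rcases le_or_gt 2 (G.verts ∩ R).ncard with hr | hr
  · calc G.edgeSet.ncard ≤ (G.verts \ R).ncard * d := ncard_edgeSet_le_mul hR hσ hd G
      _ ≤ (G.verts.ncard - 2) * d := by gcongr; omega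
      _ ≤ d * (G.verts.ncard - 2) + 1 := by rw [mul_comm]; omega
  set T := (G.verts \ R).toFinset
  have hT : T.card = (G.verts \ R).ncard := (Set.ncard_eq_toFinset_card' _).symm
  obtain ⟨v₁, hv₁, hv₁min⟩ := T.exists_min_image σ (Finset.card_pos.mp (by omega))
  obtain ⟨v₂, hv₂, hv₂min⟩ := (T.erase v₁).exists_min_image σ
    (Finset.card_pos.mp (by rw [Finset.card_erase_of_mem hv₁]; omega))
  have h₁ : (G.spanningCoe.earlierNeighborSet R σ v₁).ncard ≤ (G.verts ∩ R).ncard := by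
    simpa using ncard_earlierNeighborSet_le_ncard_add G (S := ∅) fun w hw hlt =>
      absurd (hv₁min w (Set.mem_toFinset.mpr hw)) hlt.not_ge
  have h₂ : (G.spanningCoe.earlierNeighborSet R σ v₂).ncard ≤ (G.verts ∩ R).ncard + 1 := by
    simpa using ncard_earlierNeighborSet_le_ncard_add G (S := {v₁}) fun w hw hlt =>
      by_contra fun hne =>
        (hv₂min w (Finset.mem_erase.mpr ⟨hne, Set.mem_toFinset.mpr hw⟩)).not_gt hlt
  have hbound : ∀ v ∈ T, (G.spanningCoe.earlierNeighborSet R σ v).ncard ≤ d := fun v hv =>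
    (ncard_earlierNeighborSet_le G v).trans (hd v (Set.mem_toFinset.mp hv).2)
  have hsum := (ncard_edgeSet_le_sum_ncard_earlierNeighborSet G hR hσ).trans
    (Finset.sum_le_add_add_card_sub_two_mul hv₁ (Finset.mem_of_mem_erase hv₂)
      (Finset.ne_of_mem_erase hv₂).symm hbound)
  have hd₂ := hbound v₂ (Finset.mem_of_mem_erase hv₂)
  obtain ⟨m, hm⟩ : ∃ m, (G.verts \ R).ncard = m + 2 := ⟨_, (Nat.sub_add_cancel (by omega)).symm⟩
  rw [hT, hm, Nat.add_sub_cancel] at hsum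
  rw [show G.verts.ncard - 2 = m + (G.verts ∩ R).ncard by omega]
  interval_cases (G.verts ∩ R).ncard <;> nlinarith

end Subgraph

end SimpleGraph

variable {H : SimpleGraph V} {R : Set V} {d : ℕ}

lemma rootedDensity_le_of_ncard_edgeSet_le
    (hH : ∀ G : H.Subgraph, G.edgeSet.ncard ≤ (G.verts \ R).ncard * d) :
    rootedDensity H R ≤ d := by
  refine Real.sSup_le ?_ d.cast_nonneg
  rintro _ ⟨G, hG, rfl⟩
  rw [div_le_iff₀ (by exact_mod_cast (Set.ncard_pos (Set.toFinite _)).mpr hG)]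
  exact_mod_cast (hH G).trans_eq (mul_comm _ _)

omit [Fintype V] in
lemma density2_le_of_ncard_edgeSet_le
    (hH : ∀ G : H.Subgraph, 3 ≤ G.verts.ncard → G.edgeSet.ncard ≤ d * (G.verts.ncard - 2) + 1) :
    density2 H ≤ d := by
  refine Real.sSup_le ?_ d.cast_nonneg
  rintro _ ⟨G, hG, rfl⟩
  have hG' : (3 : ℝ) ≤ G.verts.ncard := by exact_mod_cast hG
  rw [div_le_iff₀ (by linarith), sub_le_iff_le_add, ← Nat.cast_ofNat, ← Nat.cast_sub (by omega)]
  exact_mod_cast hH G hG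

theorem rootedDensity2_le_of_rootedDegeneracy_general (H : SimpleGraph V) (R : Set V) (d : ℕ)
    (hindep : ∀ u ∈ R, ∀ v ∈ R, ¬H.Adj u v)
    (hdeg : RootedDegeneracyLE H R d) :
    rootedDensity2 H R ≤ (d : ℝ) := by
  obtain ⟨σ, hσ, hback⟩ := hdeg
  have hσ' : Set.InjOn σ Rᶜ := fun v hv w hw => hσ v w hv hw
  exact max_le
    (rootedDensity_le_of_ncard_edgeSet_le fun G => G.ncard_edgeSet_le_mul hindep hσ' hback)
    (density2_le_of_ncard_edgeSet_le fun G =>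
      G.ncard_edgeSet_le_mul_sub_two_add_one hindep hσ' hback)

/-- If the degeneracy of a graph `H` rooted at an independent set `R` is at most
`d ≥ 1`, then `m₂(H,R) ≤ d`. -/
theorem rootedDensity2_le_of_rootedDegeneracy (H : SimpleGraph V) (R : Set V) (d : ℕ)
    (hindep : ∀ u ∈ R, ∀ v ∈ R, ¬H.Adj u v)
    (hd : 1 ≤ d) (hdeg : RootedDegeneracyLE H R d) :
    rootedDensity2 H R ≤ (d : ℝ) :=
  rootedDensity2_le_of_rootedDegeneracy_general H R d hindep hdeg
end

section
/- For every integer q ≥ 3 and every 2-element vertex set S, the anti-edge gadget AntiEdge_q(S) has maximum rooted density at S and maximum rooted 2-density at S both equal to (q+1)/2. -/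
/-! A subgraph on `n` vertices has at most `n.choose 2` edges, and one fewer when it contains
both (non-adjacent) roots. With `k` non-root vertices this gives `2e ≤ k(k+3)` if both roots are
present and `2e ≤ k(k+1)` otherwise; as `k + 2 ≤ q` resp. `k ≤ q`, both are at most `k(q+1)`.
Likewise `2(e-1) ≤ n(n-1) - 2 = (n-2)(n+1) ≤ (n-2)(q+1)`. The whole gadget attains `(q+1)/2`:
it has `q.choose 2 - 1` edges and `q - 2` non-root vertices. -/

variable {V : Type} [Fintype V]

/-- The anti-edge gadget `AntiEdge_q(S)`: the complete graph on `q` vertices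
minus the edge joining the two root vertices (here the roots are the vertices
of `Fin q` with values `0` and `1`). -/
def antiEdge (q : ℕ) : SimpleGraph (Fin q) where
  Adj u v := u ≠ v ∧ ¬((u.val = 0 ∧ v.val = 1) ∨ (u.val = 1 ∧ v.val = 0))
  symm := by
    constructor
    intro u v h
    exact ⟨h.1.symm, by tauto⟩
  loopless := by
    constructor
    intro u h
    exact h.1 rfl

namespace SimpleGraph

variable {W : Type*}

lemma ncard_edgeSet_top [Finite W] :
    (⊤ : SimpleGraph W).edgeSet.ncard = (Nat.card W).choose 2 := by
  classical
  have := Fintype.ofFinite W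
  rw [← coe_edgeFinset, Set.ncard_coe_finset, Nat.card_eq_fintype_card,
    card_edgeFinset_top_eq_card_choose_two]

lemma ncard_edgeSet_lt [Finite W] {G : SimpleGraph W} (hG : G ≠ ⊤) :
    G.edgeSet.ncard < (Nat.card W).choose 2 :=
  ncard_edgeSet_top (W := W) ▸ Set.ncard_lt_ncard (edgeSet_strict_mono (lt_top_iff_ne_top.2 hG))

lemma ncard_edgeSet_le [Finite W] (G : SimpleGraph W) :
    G.edgeSet.ncard ≤ (Nat.card W).choose 2 :=
  ncard_edgeSet_top (W := W) ▸ Set.ncard_le_ncard (edgeSet_mono le_top)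

namespace Subgraph

variable {G : SimpleGraph W}

lemma ncard_edgeSet_eq_coe (H : G.Subgraph) : H.edgeSet.ncard = H.coe.edgeSet.ncard := by
  rw [← H.image_coe_edgeSet_coe,
    Set.ncard_image_of_injective _ (Sym2.map.injective Subtype.val_injective)]

variable [Finite W]

lemma ncard_edgeSet_le (H : G.Subgraph) : H.edgeSet.ncard ≤ H.verts.ncard.choose 2 :=
  H.ncard_edgeSet_eq_coe ▸ H.coe.ncard_edgeSet_le

lemma ncard_edgeSet_lt {H : G.Subgraph} {a b : W} (ha : a ∈ H.verts) (hb : b ∈ H.verts)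
    (hab : a ≠ b) (hnadj : ¬G.Adj a b) : H.edgeSet.ncard < H.verts.ncard.choose 2 := by
  refine H.ncard_edgeSet_eq_coe ▸ SimpleGraph.ncard_edgeSet_lt fun htop => hnadj (H.adj_sub ?_)
  exact (show H.coe.Adj ⟨a, ha⟩ ⟨b, hb⟩ from
    htop ▸ (SimpleGraph.top_adj _ _).2 (by simpa using hab))

lemma ncard_verts_le (H : G.Subgraph) : H.verts.ncard ≤ Nat.card W := by
  rw [← Set.ncard_univ]
  exact Set.ncard_le_ncard (Set.subset_univ _)

lemma two_mul_ncard_edgeSet_le_of_not_adj {a b : W} (hab : a ≠ b) (hnadj : ¬G.Adj a b)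
    (H : G.Subgraph) :
    2 * (H.edgeSet.ncard : ℝ) ≤ (H.verts \ {a, b}).ncard * (Nat.card W + 1) := by
  set k := (H.verts \ {a, b}).ncard
  have hsplit := Set.ncard_inter_add_ncard_sdiff_eq_ncard H.verts {a, b}
  have hn := H.ncard_verts_le
  by_cases hroots : a ∈ H.verts ∧ b ∈ H.verts
  · have hint : (H.verts ∩ {a, b}).ncard = 2 := by
      rw [Set.inter_eq_right.2 (Set.pair_subset hroots.1 hroots.2), Set.ncard_pair hab]
    have he : H.edgeSet.ncard + 1 ≤ (k + 2).choose 2 := by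
      have := H.ncard_edgeSet_lt hroots.1 hroots.2 hab hnadj
      rwa [← hsplit, hint, add_comm] at this
    have he' : (H.edgeSet.ncard : ℝ) + 1 ≤ (k + 2) * (k + 1) / 2 := by
      have := (Nat.cast_le (α := ℝ)).2 he
      push_cast [Nat.cast_choose_two] at this
      linarith
    have hk : (k : ℝ) + 2 ≤ Nat.card W := by exact_mod_cast (show k + 2 ≤ Nat.card W by omega)
    nlinarith
  · have hpair : (H.verts ∩ {a, b}).ncard ≤ 1 := by
      refine (Set.ncard_le_one (Set.toFinite _)).2 fun x hx y hy => ?_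
      simp only [Set.mem_inter_iff, Set.mem_insert_iff, Set.mem_singleton_iff] at hx hy
      grind
    have he : H.edgeSet.ncard ≤ (k + 1).choose 2 :=
      H.ncard_edgeSet_le.trans (Nat.choose_le_choose 2 (by omega))
    have he' : (H.edgeSet.ncard : ℝ) ≤ (k + 1) * k / 2 := by
      have := (Nat.cast_le (α := ℝ)).2 he
      push_cast [Nat.cast_choose_two] at this
      linarith
    have hk : (k : ℝ) ≤ Nat.card W := by exact_mod_cast (show k ≤ Nat.card W by omega)
    nlinarith

lemma two_mul_ncard_edgeSet_sub_one_le (H : G.Subgraph) (h2 : 2 ≤ H.verts.ncard) :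
    2 * ((H.edgeSet.ncard : ℝ) - 1) ≤ ((H.verts.ncard : ℝ) - 2) * (Nat.card W + 1) := by
  have he := (Nat.cast_le (α := ℝ)).2 H.ncard_edgeSet_le
  push_cast [Nat.cast_choose_two] at he
  have hn : (H.verts.ncard : ℝ) ≤ Nat.card W := by exact_mod_cast H.ncard_verts_le
  have h2' : (2 : ℝ) ≤ H.verts.ncard := by exact_mod_cast h2
  nlinarith

end Subgraph

end SimpleGraph

section Densities

variable {G : SimpleGraph V}

lemma SimpleGraph.Subgraph.div_le_rootedDensity (H : G.Subgraph) {R : Set V}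
    (hR : (H.verts \ R).Nonempty) :
    (H.edgeSet.ncard : ℝ) / (H.verts \ R).ncard ≤ rootedDensity G R := by
  refine le_csSup ⟨(Nat.card V).choose 2, ?_⟩ ⟨H, hR, rfl⟩
  rintro _ ⟨H', hR', rfl⟩
  have hk : (1 : ℝ) ≤ (H'.verts \ R).ncard := by
    exact_mod_cast (Set.ncard_pos (Set.toFinite _)).2 hR'
  have he : (H'.edgeSet.ncard : ℝ) ≤ (Nat.card V).choose 2 := by
    exact_mod_cast H'.ncard_edgeSet_le.trans (Nat.choose_le_choose 2 H'.ncard_verts_le)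
  exact div_le_of_le_mul₀ (by positivity) (by positivity) (by nlinarith)

lemma rootedDensity_pair_le_of_not_adj {a b : V} (hab : a ≠ b) (hnadj : ¬G.Adj a b) :
    rootedDensity G {a, b} ≤ (Nat.card V + 1) / 2 := by
  refine Real.sSup_le ?_ (by positivity)
  rintro _ ⟨H, -, rfl⟩
  have := H.two_mul_ncard_edgeSet_le_of_not_adj hab hnadj
  exact div_le_of_le_mul₀ (by positivity) (by positivity) (by linarith)

lemma density2_le : density2 G ≤ (Nat.card V + 1) / 2 := by
  refine Real.sSup_le ?_ (by positivity)
  rintro _ ⟨H, h3, rfl⟩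
  have := H.two_mul_ncard_edgeSet_sub_one_le (by omega)
  have h3' : (3 : ℝ) ≤ H.verts.ncard := by exact_mod_cast h3
  exact div_le_of_le_mul₀ (by linarith) (by positivity) (by linarith)

end Densities

lemma antiEdge_eq_deleteEdges {q : ℕ} (hq : 1 < q) :
    antiEdge q = (⊤ : SimpleGraph (Fin q)).deleteEdges {s(⟨0, by omega⟩, ⟨1, by omega⟩)} := by
  ext u v
  simp [antiEdge, Fin.ext_iff]

lemma ncard_edgeSet_antiEdge {q : ℕ} (hq : 1 < q) :
    (antiEdge q).edgeSet.ncard + 1 = q.choose 2 := by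
  rw [antiEdge_eq_deleteEdges hq, SimpleGraph.edgeSet_deleteEdges,
    Set.ncard_sdiff_singleton_add_one, SimpleGraph.ncard_edgeSet_top, Nat.card_fin]
  simp [Fin.ext_iff]

lemma div_ncard_top_antiEdge {q : ℕ} (hq : 2 < q) :
    ((⊤ : (antiEdge q).Subgraph).edgeSet.ncard : ℝ) /
        ((⊤ : (antiEdge q).Subgraph).verts \ {⟨0, by omega⟩, ⟨1, by omega⟩}).ncard =
      ((q : ℝ) + 1) / 2 := by
  have hk : ((⊤ : (antiEdge q).Subgraph).verts \ {⟨0, by omega⟩, ⟨1, by omega⟩}).ncard =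
      q - 2 := by
    rw [SimpleGraph.Subgraph.verts_top, ← Set.compl_eq_univ_sdiff, Set.ncard_compl,
      Set.ncard_pair (by simp [Fin.ext_iff]), Nat.card_fin]
  have he := congrArg (Nat.cast (R := ℝ)) (ncard_edgeSet_antiEdge (q := q) (by omega))
  push_cast [Nat.cast_choose_two] at he
  have hq' : (2 : ℝ) < q := by exact_mod_cast hq
  rw [SimpleGraph.Subgraph.edgeSet_top, hk, Nat.cast_sub (by omega), Nat.cast_ofNat,
    div_eq_div_iff (by linarith) two_ne_zero]
  linear_combination 2 * he

/-- For every integer `q ≥ 3`, the anti-edge gadget has maximum rooted density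
and maximum rooted 2-density at its root pair `S` both equal to `(q+1)/2`. -/
theorem antiEdge_density (q : ℕ) (hq : 3 ≤ q) :
    rootedDensity (antiEdge q) ({⟨0, by omega⟩, ⟨1, by omega⟩} : Set (Fin q))
        = ((q : ℝ) + 1) / 2 ∧
    rootedDensity2 (antiEdge q) ({⟨0, by omega⟩, ⟨1, by omega⟩} : Set (Fin q))
        = ((q : ℝ) + 1) / 2 := by
  have hupper := rootedDensity_pair_le_of_not_adj (G := antiEdge q) (a := ⟨0, by omega⟩)
    (b := ⟨1, by omega⟩) (by simp [Fin.ext_iff]) (by simp [antiEdge])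
  have hnonempty : ((⊤ : (antiEdge q).Subgraph).verts \
      {⟨0, by omega⟩, ⟨1, by omega⟩}).Nonempty :=
    ⟨⟨2, by omega⟩, trivial, by simp [Fin.ext_iff]⟩
  have hrooted := le_antisymm (Nat.card_fin q ▸ hupper)
    (div_ncard_top_antiEdge hq ▸ (⊤ : (antiEdge q).Subgraph).div_le_rootedDensity hnonempty)
  refine ⟨hrooted, ?_⟩
  rw [rootedDensity2, hrooted, max_eq_left]
  simpa using density2_le (G := antiEdge q)
end

section
/- For each integer q ≥ 3, every loopless multigraph on 3 vertices with at least q(q−1) parallel edges between each pair of distinct vertices is a strong K_q-divisibility fixer. -/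
variable {V : Type} [Fintype V] [DecidableEq V]

/-- The number of edges of a multigraph given by an edge-multiplicity
function `w : Sym2 V → ℕ`. -/
def msize (w : Sym2 V → ℕ) : ℕ := ∑ f : Sym2 V, w f

/-- The degree of a vertex in a multigraph given by `w : Sym2 V → ℕ`. -/
def mdeg (w : Sym2 V → ℕ) (v : V) : ℕ := ∑ u : V, w s(v, u)

/-- A multigraph is loopless if diagonal pairs have multiplicity zero. -/
def Loopless (w : Sym2 V → ℕ) : Prop := ∀ f : Sym2 V, f.IsDiag → w f = 0

/-- A multigraph `w` is a strong `K_q`-divisibility fixer if for every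
`m < q(q-1)` and every assignment of target degrees `d v ∈ {0,…,q-2}` with
`Σ_v d v ≡ 2m (mod q-1)`, there is a sub-multigraph `w' ≤ w` with
`e(w') ≡ m (mod q(q-1))` and `d_{w'}(v) ≡ d v (mod q-1)` for every `v`. -/
def IsStrongDivFixer (q : ℕ) (w : Sym2 V → ℕ) : Prop :=
  ∀ m : ℕ, m < q * (q - 1) → ∀ d : V → ℕ, (∀ v, d v ≤ q - 2) →
    (∑ v : V, d v) ≡ 2 * m [MOD q - 1] →
    ∃ w' : Sym2 V → ℕ, (∀ f, w' f ≤ w f) ∧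
      msize w' ≡ m [MOD q * (q - 1)] ∧
      ∀ v : V, mdeg w' v ≡ d v [MOD q - 1]

/-- The multigraph on three vertices with `a` edges between `0,1`,
`b` edges between `1,2`, `c` edges between `0,2`. -/
def W3 (a b c : ℕ) : Sym2 (Fin 3) → ℕ :=
  fun f => if f = s(0, 1) then a else if f = s(1, 2) then b
    else if f = s(0, 2) then c else 0

lemma W3_00 (a b c : ℕ) : W3 a b c s(0, 0) = 0 := by
  rw [W3, if_neg (by decide), if_neg (by decide), if_neg (by decide)]
lemma W3_11 (a b c : ℕ) : W3 a b c s(1, 1) = 0 := by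
  rw [W3, if_neg (by decide), if_neg (by decide), if_neg (by decide)]
lemma W3_22 (a b c : ℕ) : W3 a b c s(2, 2) = 0 := by
  rw [W3, if_neg (by decide), if_neg (by decide), if_neg (by decide)]
lemma W3_01 (a b c : ℕ) : W3 a b c s(0, 1) = a := by
  rw [W3, if_pos (by decide)]
lemma W3_10 (a b c : ℕ) : W3 a b c s(1, 0) = a := by
  rw [W3, if_pos (by decide)]
lemma W3_12 (a b c : ℕ) : W3 a b c s(1, 2) = b := by
  rw [W3, if_neg (by decide), if_pos (by decide)]
lemma W3_21 (a b c : ℕ) : W3 a b c s(2, 1) = b := by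
  rw [W3, if_neg (by decide), if_pos (by decide)]
lemma W3_02 (a b c : ℕ) : W3 a b c s(0, 2) = c := by
  rw [W3, if_neg (by decide), if_neg (by decide), if_pos (by decide)]
lemma W3_20 (a b c : ℕ) : W3 a b c s(2, 0) = c := by
  rw [W3, if_neg (by decide), if_neg (by decide), if_pos (by decide)]

lemma msize_eq_six (w : Sym2 (Fin 3) → ℕ) :
    msize w = w s(0,0) + w s(0,1) + w s(0,2) + w s(1,1) + w s(1,2) + w s(2,2) := by
  have h : (Finset.univ : Finset (Sym2 (Fin 3)))
      = {s(0,0), s(0,1), s(0,2), s(1,1), s(1,2), s(2,2)} := by decide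
  rw [msize, h, Finset.sum_insert (by decide), Finset.sum_insert (by decide),
    Finset.sum_insert (by decide), Finset.sum_insert (by decide),
    Finset.sum_insert (by decide), Finset.sum_singleton]
  ring

lemma W3_msize (a b c : ℕ) : msize (W3 a b c) = a + b + c := by
  rw [msize_eq_six, W3_00, W3_01, W3_02, W3_11, W3_12, W3_22]; ring

lemma W3_deg0 (a b c : ℕ) : mdeg (W3 a b c) 0 = a + c := by
  rw [mdeg, Fin.sum_univ_three, W3_00, W3_01, W3_02]; ring
lemma W3_deg1 (a b c : ℕ) : mdeg (W3 a b c) 1 = a + b := by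
  rw [mdeg, Fin.sum_univ_three, W3_10, W3_11, W3_12]; ring
lemma W3_deg2 (a b c : ℕ) : mdeg (W3 a b c) 2 = b + c := by
  rw [mdeg, Fin.sum_univ_three, W3_20, W3_21, W3_22]; ring

/-- Every loopless multigraph on 3 vertices with at least `q(q-1)` parallel
edges between each pair of distinct vertices is a strong `K_q`-divisibility
fixer. -/
theorem fatTriangle_isStrongDivFixer (q : ℕ) (hq : 3 ≤ q)
    (w : Sym2 (Fin 3) → ℕ) (hl : Loopless w)
    (hmin : ∀ u v : Fin 3, u ≠ v → q * (q - 1) ≤ w s(u, v)) :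
    IsStrongDivFixer q w := by
  intro m hm d hd hsum
  set n := q - 1 with hn
  have hn2 : 2 ≤ n := by omega
  have hd0 := hd 0
  have hd1 := hd 1
  have hd2 := hd 2
  have hsum3 : d 0 + d 1 + d 2 ≡ 2 * m [MOD n] := by
    rwa [Fin.sum_univ_three] at hsum
  set a0 := (m + n - d 2) % n with ha0def
  set b0 := (m + n - d 0) % n with hb0def
  set c0 := (m + n - d 1) % n with hc0def
  -- key : adding back the subtracted degree gives m mod n
  have key : ∀ x : ℕ, x ≤ q - 2 → (m + n - x) % n + x ≡ m [MOD n] := by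
    intro x hx
    calc (m + n - x) % n + x ≡ (m + n - x) + x [MOD n] :=
          (Nat.mod_modEq _ _).add_right x
      _ = m + n := by omega
      _ ≡ m [MOD n] := Nat.add_mod_right m n
  have k2 := key (d 2) hd2
  have k0 := key (d 0) hd0
  have k1 := key (d 1) hd1
  have hdeg0 : a0 + c0 ≡ d 0 [MOD n] := by
    refine Nat.ModEq.add_right_cancel' (d 1 + d 2) ?_
    calc a0 + c0 + (d 1 + d 2) = (a0 + d 2) + (c0 + d 1) := by ring
      _ ≡ m + m [MOD n] := k2.add k1
      _ = 2 * m := by ring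
      _ ≡ d 0 + d 1 + d 2 [MOD n] := hsum3.symm
      _ = d 0 + (d 1 + d 2) := by ring
  have hdeg1 : a0 + b0 ≡ d 1 [MOD n] := by
    refine Nat.ModEq.add_right_cancel' (d 0 + d 2) ?_
    calc a0 + b0 + (d 0 + d 2) = (a0 + d 2) + (b0 + d 0) := by ring
      _ ≡ m + m [MOD n] := k2.add k0
      _ = 2 * m := by ring
      _ ≡ d 0 + d 1 + d 2 [MOD n] := hsum3.symm
      _ = d 1 + (d 0 + d 2) := by ring
  have hdeg2 : b0 + c0 ≡ d 2 [MOD n] := by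
    refine Nat.ModEq.add_right_cancel' (d 0 + d 1) ?_
    calc b0 + c0 + (d 0 + d 1) = (b0 + d 0) + (c0 + d 1) := by ring
      _ ≡ m + m [MOD n] := k0.add k1
      _ = 2 * m := by ring
      _ ≡ d 0 + d 1 + d 2 [MOD n] := hsum3.symm
      _ = d 2 + (d 0 + d 1) := by ring
  have hS : a0 + b0 + c0 ≡ m [MOD n] := by
    refine Nat.ModEq.add_right_cancel' (d 0 + d 1 + d 2) ?_
    calc a0 + b0 + c0 + (d 0 + d 1 + d 2)
        = (a0 + d 2) + (b0 + d 0) + (c0 + d 1) := by ring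
      _ ≡ m + m + m [MOD n] := (k2.add k0).add k1
      _ = m + 2 * m := by ring
      _ ≡ m + (d 0 + d 1 + d 2) [MOD n] := hsum3.symm.add_left m
  set N := q * n with hN
  have hnN : 3 * n ≤ N := Nat.mul_le_mul_right n hq
  have hnposN : n ≤ N := by omega
  have ha0lt : a0 < n := Nat.mod_lt _ (by omega)
  have hb0lt : b0 < n := Nat.mod_lt _ (by omega)
  have hc0lt : c0 < n := Nat.mod_lt _ (by omega)
  have hNmod : m + N ≡ m [MOD n] := by
    calc m + N = m + n * q := by rw [hN]; ring
      _ ≡ m + 0 [MOD n] := (Nat.modEq_zero_iff_dvd.2 ⟨q, rfl⟩).add_left m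
      _ = m := by ring
  have hdvd : n ∣ (m + N - (a0 + b0 + c0)) := by
    refine Nat.modEq_zero_iff_dvd.1 ?_
    refine Nat.ModEq.add_right_cancel' (a0 + b0 + c0) ?_
    calc m + N - (a0 + b0 + c0) + (a0 + b0 + c0) = m + N := by omega
      _ ≡ m [MOD n] := hNmod
      _ ≡ a0 + b0 + c0 [MOD n] := hS.symm
      _ = 0 + (a0 + b0 + c0) := by ring
  set u := (m + N - (a0 + b0 + c0)) / n with hu_def
  have hu : u * n = m + N - (a0 + b0 + c0) := Nat.div_mul_cancel hdvd
  set t := u % q with ht_def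
  have ht : t < q := Nat.mod_lt _ (by omega)
  have htu : t * n ≡ u * n [MOD N] := by
    rw [hN]; exact (Nat.mod_modEq u q).mul_right' n
  set a := a0 + t * n with ha_def
  have haN : a < N := by
    have tle : t * n ≤ (q - 1) * n := Nat.mul_le_mul_right n (by omega)
    have e1 : (q - 1) * n = q * n - n := Nat.sub_one_mul q n
    omega
  have hsize : a + b0 + c0 ≡ m [MOD N] := by
    calc a + b0 + c0 = (a0 + b0 + c0) + t * n := by rw [ha_def]; ring
      _ ≡ (a0 + b0 + c0) + u * n [MOD N] := htu.add_left _
      _ = m + N := by omega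
      _ ≡ m [MOD N] := Nat.add_mod_right m N
  have hamod : a ≡ a0 [MOD n] := by
    calc a = a0 + t * n := ha_def
      _ ≡ a0 + 0 [MOD n] := (Nat.modEq_zero_iff_dvd.2 ⟨t, mul_comm t n⟩).add_left a0
      _ = a0 := by ring
  refine ⟨W3 a b0 c0, ?_, ?_, ?_⟩
  · intro f
    rw [W3]
    split_ifs with h1 h2 h3
    · rw [h1]; exact le_trans haN.le (hmin 0 1 (by decide))
    · rw [h2]; exact le_trans (by omega) (hmin 1 2 (by decide))
    · rw [h3]; exact le_trans (by omega) (hmin 0 2 (by decide))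
    · exact Nat.zero_le _
  · rw [W3_msize]; exact hsize
  · intro v
    fin_cases v
    · show mdeg (W3 a b0 c0) 0 ≡ d 0 [MOD n]
      rw [W3_deg0]
      exact ((hamod.add_right c0).trans hdeg0)
    · show mdeg (W3 a b0 c0) 1 ≡ d 1 [MOD n]
      rw [W3_deg1]
      exact ((hamod.add_right b0).trans hdeg1)
    · show mdeg (W3 a b0 c0) 2 ≡ d 2 [MOD n]
      rw [W3_deg2]
      exact hdeg2
end

section
/- For integers q ≥ 3, and m ∈ {0,…,q(q−1)−1}, d_x, d_y, d_z ∈ {0,…,q−2} with d_x + d_y + d_z ≡ 2m (mod q−1), there exist e_{xy}, e_{xz}, e_{yz} ∈ {0,…,q(q−1)−1} such that e_{xy}+e_{xz} ≡ d_x (mod q(q−1)), e_{xy}+e_{yz} ≡ d_y (mod q−1), e_{xz}+e_{yz} ≡ d_z (mod q(q−1)), and e_{xy}+e_{xz}+e_{yz} ≡ m (mod q(q−1)). -/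
/-- Given `q ≥ 3`, `m < q(q-1)`, and `d_x, d_y, d_z ∈ {0,…,q-2}` with
`d_x + d_y + d_z ≡ 2m (mod q-1)`, there are edge multiplicities
`e_{xy}, e_{xz}, e_{yz} ∈ {0,…,q(q-1)-1}` with
`e_{xy}+e_{xz} ≡ d_x (mod q(q-1))`, `e_{xy}+e_{yz} ≡ d_y (mod q-1)`,
`e_{xz}+e_{yz} ≡ d_z (mod q(q-1))`, and
`e_{xy}+e_{xz}+e_{yz} ≡ m (mod q(q-1))`. -/
theorem triangle_congruences (q m dx dy dz : ℕ) (hq : 3 ≤ q)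
    (hm : m < q * (q - 1)) (hdx : dx ≤ q - 2) (hdy : dy ≤ q - 2)
    (hdz : dz ≤ q - 2) (hsum : dx + dy + dz ≡ 2 * m [MOD q - 1]) :
    ∃ exy exz eyz : ℕ,
      exy < q * (q - 1) ∧ exz < q * (q - 1) ∧ eyz < q * (q - 1) ∧
      exy + exz ≡ dx [MOD q * (q - 1)] ∧
      exy + eyz ≡ dy [MOD q - 1] ∧
      exz + eyz ≡ dz [MOD q * (q - 1)] ∧
      exy + exz + eyz ≡ m [MOD q * (q - 1)] := by
  set N := q * (q - 1) with hNdef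
  have hqN : q ≤ N := Nat.le_mul_of_pos_right q (by omega)
  have hN : 0 < N := by omega
  have hdvd : (q - 1) ∣ N := Dvd.intro_left q rfl
  refine ⟨(m + N - dz) % N, (dx + dz + N - m) % N, (m + N - dx) % N,
    Nat.mod_lt _ hN, Nat.mod_lt _ hN, Nat.mod_lt _ hN, ?_, ?_, ?_, ?_⟩
  · calc (m + N - dz) % N + (dx + dz + N - m) % N
        ≡ (m + N - dz) + (dx + dz + N - m) [MOD N] :=
          (Nat.mod_modEq _ _).add (Nat.mod_modEq _ _)
      _ = dx + 2 * N := by omega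
      _ ≡ dx + 0 [MOD N] :=
          Nat.ModEq.add_left dx ((Nat.modEq_zero_iff_dvd).mpr ⟨2, by ring⟩)
      _ = dx := by omega
  · have h2N : (2 * N : ℕ) ≡ 0 [MOD q - 1] :=
      (Nat.modEq_zero_iff_dvd).mpr (Dvd.dvd.mul_left hdvd 2)
    have key : (m + N - dz) + (m + N - dx) + (dx + dz) ≡ dy + (dx + dz) [MOD q - 1] := by
      have he : (m + N - dz) + (m + N - dx) + (dx + dz) = 2 * m + 2 * N := by omega
      rw [he]
      calc 2 * m + 2 * N ≡ 2 * m + 0 [MOD q - 1] := Nat.ModEq.add_left _ h2N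
        _ = 2 * m := by omega
        _ ≡ dx + dy + dz [MOD q - 1] := hsum.symm
        _ = dy + (dx + dz) := by ring
    calc (m + N - dz) % N + (m + N - dx) % N
        ≡ (m + N - dz) + (m + N - dx) [MOD q - 1] :=
          ((Nat.mod_modEq _ _).add (Nat.mod_modEq _ _)).of_dvd hdvd
      _ ≡ dy [MOD q - 1] := key.add_right_cancel' _
  · calc (dx + dz + N - m) % N + (m + N - dx) % N
        ≡ (dx + dz + N - m) + (m + N - dx) [MOD N] :=
          (Nat.mod_modEq _ _).add (Nat.mod_modEq _ _)
      _ = dz + 2 * N := by omega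
      _ ≡ dz + 0 [MOD N] :=
          Nat.ModEq.add_left dz ((Nat.modEq_zero_iff_dvd).mpr ⟨2, by ring⟩)
      _ = dz := by omega
  · calc (m + N - dz) % N + (dx + dz + N - m) % N + (m + N - dx) % N
        ≡ (m + N - dz) + (dx + dz + N - m) + (m + N - dx) [MOD N] :=
          ((Nat.mod_modEq _ _).add (Nat.mod_modEq _ _)).add (Nat.mod_modEq _ _)
      _ = m + 3 * N := by omega
      _ ≡ m + 0 [MOD N] :=
          Nat.ModEq.add_left m ((Nat.modEq_zero_iff_dvd).mpr ⟨3, by ring⟩)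
      _ = m := by omega
end

section
/- Let q ≥ 3 be an integer. If a multigraph F₁ is a strong K_q-divisibility fixer and F₂ is obtained from F₁ by adding one new vertex together with at least q−2 non-loop edges incident to it, then F₂ is also a strong K_q-divisibility fixer. -/
variable {V : Type} [Fintype V] [DecidableEq V]

lemma exists_le_sum_eq' {α : Type*} [DecidableEq α] (s : Finset α) (f : α → ℕ) (n : ℕ)
    (h : n ≤ ∑ a ∈ s, f a) : ∃ c : α → ℕ, (∀ a, c a ≤ f a) ∧ ∑ a ∈ s, c a = n := by
  induction s using Finset.induction_on generalizing n with
  | empty =>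
    refine ⟨fun _ => 0, fun _ => Nat.zero_le _, ?_⟩
    simp at h ⊢; omega
  | @insert a s ha ih =>
    rw [Finset.sum_insert ha] at h
    by_cases hn : n ≤ f a
    · refine ⟨fun x => if x = a then n else 0, ?_, ?_⟩
      · intro x; by_cases hx : x = a <;> simp [hx, hn]
      · rw [Finset.sum_insert ha, if_pos rfl, Finset.sum_eq_zero, add_zero]
        intro x hx
        have : x ≠ a := fun he => ha (he ▸ hx)
        simp [this]
    · obtain ⟨c', hc'le, hc'sum⟩ := ih (n - f a) (by omega)
      refine ⟨fun x => if x = a then f a else c' x, ?_, ?_⟩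
      · intro x; by_cases hx : x = a <;> simp [hx, hc'le x]
      · rw [Finset.sum_insert ha, if_pos rfl]
        have : ∑ x ∈ s, (if x = a then f a else c' x) = ∑ x ∈ s, c' x := by
          apply Finset.sum_congr rfl
          intro x hx
          have : x ≠ a := fun he => ha (he ▸ hx)
          simp [this]
        rw [this, hc'sum]; omega

lemma sym2_option_sum (g : Sym2 (Option V) → ℕ) :
    ∑ f : Sym2 (Option V), g f =
      (∑ u : Option V, g s((none : Option V), u)) + ∑ e : Sym2 V, g (e.map some) := by
  classical
  have huniv : (Finset.univ : Finset (Sym2 (Option V))) =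
      Finset.univ.image (fun u : Option V => s((none : Option V), u)) ∪
      Finset.univ.image (Sym2.map (some : V → Option V)) := by
    ext f
    simp only [Finset.mem_univ, true_iff, Finset.mem_union, Finset.mem_image]
    induction f using Sym2.ind with
    | _ a b =>
      match a, b with
      | none, b => exact Or.inl ⟨b, trivial, rfl⟩
      | some u, none => exact Or.inl ⟨some u, trivial, (Sym2.eq_swap)⟩
      | some u, some v => exact Or.inr ⟨s(u, v), trivial, by rw [Sym2.map_pair_eq]⟩
  rw [huniv, Finset.sum_union, Finset.sum_image, Finset.sum_image]
  · intro x _ y _ h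
    exact Sym2.map.injective (Option.some_injective _) h
  · intro x _ y _ h
    exact Sym2.congr_right.mp h
  · rw [Finset.disjoint_left]
    rintro f hf1 hf2
    simp only [Finset.mem_image, Finset.mem_univ, true_and] at hf1 hf2
    obtain ⟨u, rfl⟩ := hf1
    obtain ⟨e, he⟩ := hf2
    have : (none : Option V) ∈ Sym2.map some e := he ▸ Sym2.mem_mk_left _ _
    rw [Sym2.mem_map] at this
    obtain ⟨a, -, ha⟩ := this
    exact Option.some_ne_none a ha

/-- If the multigraph `w₁` is a strong `K_q`-divisibility fixer and `w₂` is
obtained from `w₁` by adding one new vertex (the vertex `none` of `Option V`)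
together with at least `q-2` non-loop edges incident to it, then `w₂` is also a
strong `K_q`-divisibility fixer. -/
theorem strongDivFixer_add_vertex (q : ℕ) (hq : 3 ≤ q)
    (w₁ : Sym2 V → ℕ) (hl₁ : Loopless w₁) (hfix : IsStrongDivFixer q w₁)
    (w₂ : Sym2 (Option V) → ℕ) (hl₂ : Loopless w₂)
    (hrestrict : ∀ u v : V, w₂ s((some u : Option V), (some v : Option V)) = w₁ s(u, v))
    (hnew : q - 2 ≤ mdeg w₂ (none : Option V)) :
    IsStrongDivFixer q w₂ := by
  intro m hm d hd hcong
  set Q := q * (q - 1) with hQdef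
  have hQpos : 0 < Q := Nat.mul_pos (by omega) (by omega)
  have hq1 : 2 ≤ q - 1 := by omega
  have hQge : q ≤ Q := Nat.le_mul_of_pos_right q (by omega)
  set k := d none with hkdef
  have hk : k ≤ q - 2 := hd none
  -- choose c v edges from none to some v, total k
  have hsumw : q - 2 ≤ ∑ v : V, w₂ s((none : Option V), some v) := by
    have h0 := hnew
    rw [mdeg, Fintype.sum_option, hl₂ s((none : Option V), none) (by simp), zero_add] at h0
    exact h0
  obtain ⟨c, hc_le, hc_sum⟩ := exists_le_sum_eq' Finset.univ
    (fun v => w₂ s((none : Option V), some v)) k (hk.trans hsumw)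
  have hcv : ∀ v, c v ≤ q - 2 := by
    intro v
    have h1 : c v ≤ ∑ x : V, c x :=
      Finset.single_le_sum (fun _ _ => Nat.zero_le _) (Finset.mem_univ v)
    rw [hc_sum] at h1
    omega
  set m' := (m + Q - k) % Q with hm'def
  set d' : V → ℕ := fun v => (d (some v) + (q - 1) - c v) % (q - 1) with hd'def
  have hd'le : ∀ v, d' v ≤ q - 2 := by
    intro v
    have : d' v < q - 1 := Nat.mod_lt _ (by omega)
    omega
  -- cast facts
  have hd'cast : ∀ v, (d' v : ZMod (q - 1)) = (d (some v) : ZMod (q - 1)) - c v := by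
    intro v
    have hle : c v ≤ d (some v) + (q - 1) := by have := hcv v; omega
    rw [hd'def]
    push_cast [ZMod.natCast_mod, Nat.cast_sub hle]
    rw [ZMod.natCast_self]
    ring
  have hm'cast : (m' : ZMod (q - 1)) = (m : ZMod (q - 1)) - k := by
    have hdvd : q - 1 ∣ Q := ⟨q, by rw [hQdef, mul_comm]⟩
    have h1 : m' ≡ m + Q - k [MOD q - 1] :=
      (Nat.mod_modEq _ _).of_dvd hdvd
    have h2 : (m' : ZMod (q - 1)) = ((m + Q - k : ℕ) : ZMod (q - 1)) :=
      (ZMod.natCast_eq_natCast_iff _ _ _).mpr h1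
    have hkle : k ≤ m + Q := by omega
    rw [h2, Nat.cast_sub hkle, Nat.cast_add, hQdef]
    push_cast
    rw [ZMod.natCast_self]
    ring
  have hm'castQ : (m' : ZMod Q) = (m : ZMod Q) - k := by
    have hkle : k ≤ m + Q := by omega
    rw [hm'def, ZMod.natCast_mod, Nat.cast_sub hkle, Nat.cast_add, ZMod.natCast_self]
    ring
  -- congruence hypothesis for the fixer
  have hcongZ : (k : ZMod (q - 1)) + ∑ v : V, (d (some v) : ZMod (q - 1)) =
      2 * (m : ZMod (q - 1)) := by
    have := (ZMod.natCast_eq_natCast_iff _ _ _).mpr hcong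
    rw [Fintype.sum_option] at this
    push_cast at this
    rw [← this, hkdef]
  have key : (∑ v : V, d' v) ≡ 2 * m' [MOD q - 1] := by
    rw [← ZMod.natCast_eq_natCast_iff]
    push_cast
    rw [Finset.sum_congr rfl (fun v _ => hd'cast v), hm'cast, Finset.sum_sub_distrib]
    have hcsum' : (∑ v : V, (c v : ZMod (q - 1))) = (k : ZMod (q - 1)) := by
      rw [← Nat.cast_sum, hc_sum]
    rw [hcsum']
    linear_combination hcongZ
  obtain ⟨w₁', hw₁'le, hw₁'size, hw₁'deg⟩ :=
    hfix m' (Nat.mod_lt _ hQpos) d' hd'le key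
  -- build the new subgraph
  set g : Option V → Option V → ℕ := fun a b =>
    match a, b with
    | some u, some v => w₁' s(u, v)
    | none, some v => c v
    | some u, none => c u
    | none, none => 0 with hgdef
  have hgsymm : ∀ a b, g a b = g b a := by
    intro a b
    match a, b with
    | some u, some v => simp only [hgdef]; rw [Sym2.eq_swap]
    | none, some v => rfl
    | some u, none => rfl
    | none, none => rfl
  set w₂' : Sym2 (Option V) → ℕ := Sym2.lift ⟨g, hgsymm⟩ with hw₂'def
  have hlift : ∀ a b, w₂' s(a, b) = g a b := fun a b => Sym2.lift_mk _ a b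
  have hSS : ∀ u v : V, w₂' s((some u : Option V), some v) = w₁' s(u, v) :=
    fun u v => hlift (some u) (some v)
  have hNS : ∀ v : V, w₂' s((none : Option V), some v) = c v := fun v => hlift none (some v)
  have hSN : ∀ v : V, w₂' s((some v : Option V), none) = c v := fun v => hlift (some v) none
  have hNN : w₂' s((none : Option V), none) = 0 := hlift none none
  have hmap : ∀ e : Sym2 V, w₂' (e.map some) = w₁' e := by
    intro e
    induction e using Sym2.ind with
    | _ u v => rw [Sym2.map_pair_eq, hlift]
  refine ⟨w₂', ?_, ?_, ?_⟩
  · -- subgraph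
    intro f
    induction f using Sym2.ind with
    | _ a b =>
      match a, b with
      | some u, some v => rw [hSS, hrestrict]; exact hw₁'le _
      | none, some v => rw [hNS]; exact hc_le v
      | some u, none =>
        rw [hSN]
        have heq : s((some u : Option V), none) = s((none : Option V), some u) := Sym2.eq_swap
        rw [heq]
        exact hc_le u
      | none, none => rw [hNN]; exact Nat.zero_le _
  · -- size
    have hsz : msize w₂' = k + msize w₁' := by
      rw [msize, sym2_option_sum, Fintype.sum_option]
      rw [hNN, zero_add, Finset.sum_congr rfl (fun v _ => hNS v), hc_sum,
        Finset.sum_congr rfl (fun e _ => hmap e)]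
      rfl
    rw [← ZMod.natCast_eq_natCast_iff] at hw₁'size ⊢
    rw [hsz]
    push_cast
    rw [hw₁'size, hm'castQ]
    ring
  · -- degrees
    intro v
    match v with
    | none =>
      have heq : mdeg w₂' none = k := by
        rw [mdeg, Fintype.sum_option, hNN, zero_add,
          Finset.sum_congr rfl (fun v _ => hNS v), hc_sum]
      rw [heq]
    | some v =>
      have hdeg : mdeg w₂' (some v) = c v + mdeg w₁' v := by
        rw [mdeg, Fintype.sum_option, hSN]
        congr 1
      have hdv := hw₁'deg v
      rw [← ZMod.natCast_eq_natCast_iff] at hdv ⊢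
      rw [hdeg]
      push_cast
      rw [hdv, hd'cast v]
      ring
end

section
/- Let q ≥ 3 be an integer. If a multigraph F₁ is a K_q-divisibility fixer, e is an edge of F₁, and X is a copy of FakeEdge_q(e) that is edge-disjoint from F₁ with the vertices of X's root pair contained in V(F₁), then the graph F₂ := (F₁ − e) ∪ X is also a K_q-divisibility fixer. -/
/-- The vertex type of the fake-edge gadget. -/
abbrev FakeVert (q : ℕ) := Fin q ⊕ (Sym2 (Fin q) × Fin (q - 2))

/-- A pair of core vertices is valid if it is a non-diagonal pair other than
the root pair `{0,1}`. -/
def ValidPair (q : ℕ) (f : Sym2 (Fin q)) : Prop :=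
  ¬f.IsDiag ∧ ∃ v ∈ f, 2 ≤ v.val

/-- The fake-edge gadget `FakeEdge_q(S)` (roots: core vertices `0` and `1`). -/
def fakeEdge (q : ℕ) : SimpleGraph (FakeVert q) :=
  SimpleGraph.fromRel (fun a b =>
    (∃ (u : Fin q) (f : Sym2 (Fin q)) (i : Fin (q - 2)),
        a = Sum.inl u ∧ b = Sum.inr (f, i) ∧ ValidPair q f ∧ u ∈ f) ∨
    (∃ (f : Sym2 (Fin q)) (i j : Fin (q - 2)),
        a = Sum.inr (f, i) ∧ b = Sum.inr (f, j) ∧ ValidPair q f ∧ i ≠ j))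

variable {V : Type} [Fintype V] [DecidableEq V]

/-- A multigraph `w` is a `K_q`-divisibility fixer. -/
def IsMultiDivFixer (q : ℕ) (w : Sym2 V → ℕ) : Prop :=
  ∀ m : ℕ, m < q.choose 2 → ∀ d : V → ℕ, (∀ v, d v ≤ q - 2) →
    (∑ v : V, d v) ≡ 2 * m [MOD q - 1] →
    ∃ w' : Sym2 V → ℕ, (∀ f, w' f ≤ w f) ∧
      msize w' ≡ m [MOD q.choose 2] ∧
      ∀ v : V, mdeg w' v ≡ d v [MOD q - 1]

open Finset

noncomputable instance (q : ℕ) : DecidablePred (ValidPair q) := Classical.decPred _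

noncomputable instance (q : ℕ) : DecidableRel (fakeEdge q).Adj := Classical.decRel _

lemma fakeEdge_adj {q : ℕ} (a b : FakeVert q) :
    (fakeEdge q).Adj a b ↔
      (∃ u f i, ValidPair q f ∧ u ∈ f ∧
        ((a = Sum.inl u ∧ b = Sum.inr (f, i)) ∨ (b = Sum.inl u ∧ a = Sum.inr (f, i)))) ∨
      (∃ f i j, ValidPair q f ∧ i ≠ j ∧ a = Sum.inr (f, i) ∧ b = Sum.inr (f, j)) := by
  rw [fakeEdge, SimpleGraph.fromRel_adj]
  constructor
  · rintro ⟨hne, (⟨u,f,i,rfl,rfl,hv,hu⟩|⟨f,i,j,rfl,rfl,hv,hij⟩)|(⟨u,f,i,rfl,rfl,hv,hu⟩|⟨f,i,j,rfl,rfl,hv,hij⟩)⟩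
    · exact Or.inl ⟨u,f,i,hv,hu,Or.inl ⟨rfl,rfl⟩⟩
    · exact Or.inr ⟨f,i,j,hv,hij,rfl,rfl⟩
    · exact Or.inl ⟨u,f,i,hv,hu,Or.inr ⟨rfl,rfl⟩⟩
    · exact Or.inr ⟨f,j,i,hv,hij.symm,rfl,rfl⟩
  · rintro (⟨u,f,i,hv,hu,(⟨rfl,rfl⟩|⟨rfl,rfl⟩)⟩|⟨f,i,j,hv,hij,rfl,rfl⟩)
    · exact ⟨by simp, Or.inl (Or.inl ⟨u,f,i,rfl,rfl,hv,hu⟩)⟩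
    · exact ⟨by simp, Or.inr (Or.inl ⟨u,f,i,rfl,rfl,hv,hu⟩)⟩
    · exact ⟨by simpa using hij, Or.inl (Or.inr ⟨f,i,j,rfl,rfl,hv,hij⟩)⟩
lemma adj_inl_inl {q : ℕ} (u v : Fin q) : ¬ (fakeEdge q).Adj (Sum.inl u) (Sum.inl v) := by
  rw [fakeEdge_adj]
  rintro (⟨u',f,i,hv,hu,(⟨h1,h2⟩|⟨h1,h2⟩)⟩|⟨f,i,j,hv,hij,h1,h2⟩) <;> simp_all

lemma adj_inl_inr {q : ℕ} (u : Fin q) (f : Sym2 (Fin q)) (i : Fin (q-2)) :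
    (fakeEdge q).Adj (Sum.inl u) (Sum.inr (f, i)) ↔ ValidPair q f ∧ u ∈ f := by
  rw [fakeEdge_adj]
  constructor
  · rintro (⟨u',f',i',hv,hu,(⟨h1,h2⟩|⟨h1,h2⟩)⟩|⟨f',i',j',hv,hij,h1,h2⟩) <;> simp_all
  · rintro ⟨hv, hu⟩
    exact Or.inl ⟨u, f, i, hv, hu, Or.inl ⟨rfl, rfl⟩⟩

lemma adj_inr_inr {q : ℕ} (f g : Sym2 (Fin q)) (i j : Fin (q-2)) :
    (fakeEdge q).Adj (Sum.inr (f, i)) (Sum.inr (g, j)) ↔ g = f ∧ ValidPair q f ∧ i ≠ j := by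
  rw [fakeEdge_adj]
  constructor
  · rintro (⟨u',f',i',hv,hu,(⟨h1,h2⟩|⟨h1,h2⟩)⟩|⟨f',i',j',hv,hij,h1,h2⟩) <;> simp_all
  · rintro ⟨rfl, hv, hij⟩
    exact Or.inr ⟨g, i, j, hv, hij, rfl, rfl⟩

lemma validPair_iff {q : ℕ} (hq : 3 ≤ q) (f : Sym2 (Fin q)) :
    ValidPair q f ↔ ¬f.IsDiag ∧ f ≠ s((⟨0, by omega⟩ : Fin q), (⟨1, by omega⟩ : Fin q)) := by
  induction f using Sym2.ind with
  | _ a b =>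
    unfold ValidPair
    simp only [Sym2.mem_iff, Sym2.isDiag_iff_proj_eq, Sym2.eq_iff, Ne, Fin.ext_iff, Fin.val_mk]
    constructor
    · rintro ⟨hne, v, hv, h2⟩
      refine ⟨hne, ?_⟩
      omega
    · rintro ⟨hne, hr⟩
      refine ⟨hne, ?_⟩
      by_cases h : 2 ≤ (a : ℕ)
      · exact ⟨a, Or.inl rfl, h⟩
      · exact ⟨b, Or.inr rfl, by omega⟩

open Finset in
lemma card_nondiag_mem {q : ℕ} (u : Fin q) :
    (univ.filter fun f : Sym2 (Fin q) => ¬f.IsDiag ∧ u ∈ f).card = q - 1 := by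
  classical
  have himg : (univ.filter fun f : Sym2 (Fin q) => ¬f.IsDiag ∧ u ∈ f)
      = (univ.erase u).image (fun v => s(u, v)) := by
    ext f
    simp only [mem_filter, true_and, and_true, mem_univ, mem_image, mem_erase]
    constructor
    · rintro ⟨hnd, hu⟩
      obtain ⟨v, rfl⟩ := Sym2.mem_iff_exists.mp hu
      refine ⟨v, ?_, rfl⟩
      rintro rfl
      exact hnd (by simp)
    · rintro ⟨v, hvu, rfl⟩
      refine ⟨?_, by simp⟩
      simp only [Sym2.mk_isDiag_iff]
      exact fun h => hvu h.symm
  rw [himg, card_image_of_injOn, card_erase_of_mem (mem_univ u), Finset.card_univ, Fintype.card_fin]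
  intro v _ v' _ h
  exact Sym2.congr_right.mp h
open Finset

lemma card_valid_mem {q : ℕ} (hq : 3 ≤ q) (u : Fin q) :
    (univ.filter fun f => ValidPair q f ∧ u ∈ f).card
      = if (u : ℕ) < 2 then q - 2 else q - 1 := by
  classical
  set r : Sym2 (Fin q) := s((⟨0, by omega⟩ : Fin q), (⟨1, by omega⟩ : Fin q)) with hr
  by_cases h : (u : ℕ) < 2
  · rw [if_pos h]
    have heq : (univ.filter fun f => ValidPair q f ∧ u ∈ f)
        = (univ.filter fun f : Sym2 (Fin q) => ¬f.IsDiag ∧ u ∈ f).erase r := by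
      ext f
      simp only [mem_filter, mem_erase, validPair_iff hq, ← hr]
      tauto
    have hrmem : r ∈ univ.filter fun f : Sym2 (Fin q) => ¬f.IsDiag ∧ u ∈ f := by
      simp only [mem_filter, mem_univ, true_and, hr, Sym2.mk_isDiag_iff, Sym2.mem_iff]
      constructor
      · intro hcon; have := congrArg Fin.val hcon; simp at this
      · rcases Nat.lt_or_ge (u : ℕ) 1 with h1 | h1
        · exact Or.inl (Fin.ext (by simp only [Fin.val_mk]; omega))
        · exact Or.inr (Fin.ext (by simp only [Fin.val_mk]; omega))
    rw [heq, card_erase_of_mem hrmem, card_nondiag_mem]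
    omega
  · rw [if_neg h]
    have heq : (univ.filter fun f => ValidPair q f ∧ u ∈ f)
        = (univ.filter fun f : Sym2 (Fin q) => ¬f.IsDiag ∧ u ∈ f) := by
      ext f
      simp only [mem_filter, validPair_iff hq, ← hr]
      constructor
      · tauto
      · rintro ⟨h1, h2, h3⟩
        refine ⟨h1, ⟨h2, ?_⟩, h3⟩
        rintro rfl
        rw [hr] at h3
        rcases Sym2.mem_iff.mp h3 with rfl | rfl <;> simp at h
    rw [heq, card_nondiag_mem]

lemma card_pair_mem {q : ℕ} {f : Sym2 (Fin q)} (h : ¬f.IsDiag) :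
    (univ.filter fun u => u ∈ f).card = 2 := by
  classical
  induction f using Sym2.ind with
  | _ a b =>
    have hab : a ≠ b := by simpa [Sym2.mk_isDiag_iff] using h
    have heq : (univ.filter fun u => u ∈ s(a, b)) = {a, b} := by
      ext u; simp [Sym2.mem_iff]
    rw [heq, card_insert_of_notMem (by simpa using hab), card_singleton]

lemma card_valid {q : ℕ} (hq : 3 ≤ q) :
    (univ.filter (ValidPair q)).card = q.choose 2 - 1 := by
  classical
  set r : Sym2 (Fin q) := s((⟨0, by omega⟩ : Fin q), (⟨1, by omega⟩ : Fin q)) with hr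
  have heq : univ.filter (ValidPair q)
      = (univ.filter fun f : Sym2 (Fin q) => ¬f.IsDiag).erase r := by
    ext f
    simp only [mem_filter, mem_erase, validPair_iff hq, ← hr]
    tauto
  have hrmem : r ∈ univ.filter fun f : Sym2 (Fin q) => ¬f.IsDiag := by
    simp only [mem_filter, mem_univ, true_and, hr, Sym2.mk_isDiag_iff]
    intro hcon; have := congrArg Fin.val hcon; simp at this
  have hnd : (univ.filter fun f : Sym2 (Fin q) => ¬f.IsDiag).card = q.choose 2 := by
    rw [← Fintype.card_subtype, Sym2.card_subtype_not_diag, Fintype.card_fin]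
  rw [heq, card_erase_of_mem hrmem, hnd]
lemma adj_inr_inl {q : ℕ} (u : Fin q) (f : Sym2 (Fin q)) (i : Fin (q-2)) :
    (fakeEdge q).Adj (Sum.inr (f, i)) (Sum.inl u) ↔ ValidPair q f ∧ u ∈ f := by
  rw [SimpleGraph.adj_comm, adj_inl_inr]

lemma deg_inl {q : ℕ} (hq : 3 ≤ q) (u : Fin q) :
    (fakeEdge q).degree (Sum.inl u)
      = (if (u : ℕ) < 2 then q - 2 else q - 1) * (q - 2) := by
  classical
  have hdeg : (fakeEdge q).degree (Sum.inl u)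
      = (univ.filter ((fakeEdge q).Adj (Sum.inl u))).card := by
    rw [← SimpleGraph.neighborFinset_eq_filter]; rfl
  have himg : univ.filter ((fakeEdge q).Adj (Sum.inl u))
      = ((univ.filter fun f => ValidPair q f ∧ u ∈ f) ×ˢ (univ : Finset (Fin (q-2)))).image
          Sum.inr := by
    ext x
    cases x with
    | inl v => simp [adj_inl_inl]
    | inr p =>
      obtain ⟨f, i⟩ := p
      simp [adj_inl_inr, Finset.mem_product, Prod.ext_iff, and_comm, eq_comm]
  rw [hdeg, himg, card_image_of_injective _ Sum.inr_injective, card_product, card_univ,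
    Fintype.card_fin, card_valid_mem hq]

lemma deg_inr {q : ℕ} (hq : 3 ≤ q) (f : Sym2 (Fin q)) (i : Fin (q-2)) :
    (fakeEdge q).degree (Sum.inr (f, i)) = if ValidPair q f then q - 1 else 0 := by
  classical
  have hdeg : (fakeEdge q).degree (Sum.inr (f, i))
      = (univ.filter ((fakeEdge q).Adj (Sum.inr (f, i)))).card := by
    rw [← SimpleGraph.neighborFinset_eq_filter]; rfl
  by_cases hv : ValidPair q f
  · rw [hdeg, if_pos hv]
    have himg : univ.filter ((fakeEdge q).Adj (Sum.inr (f, i)))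
        = (univ.filter fun u => u ∈ f).image Sum.inl
            ∪ (univ.erase i).image (fun j => Sum.inr (f, j)) := by
      ext x
      cases x with
      | inl v => simp [adj_inr_inl, hv]
      | inr p =>
        obtain ⟨g, j⟩ := p
        simp only [adj_inr_inr, mem_filter, mem_univ, true_and, mem_union, mem_image,
          mem_erase, Sum.inr.injEq, Prod.mk.injEq, hv]
        constructor
        · rintro ⟨rfl, hij⟩
          exact Or.inr ⟨j, ⟨fun h => hij h.symm, trivial⟩, rfl, rfl⟩
        · rintro ((⟨v, -, h⟩) | ⟨j', ⟨hj', -⟩, rfl, rfl⟩)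
          · exact absurd h (by simp)
          · exact ⟨rfl, fun h => hj' h.symm⟩
    have hinj : Function.Injective (fun j : Fin (q-2) => (Sum.inr (f, j) : FakeVert q)) := by
      intro a b h
      simpa using h
    have hdisj : Disjoint ((univ.filter fun u => u ∈ f).image Sum.inl)
        ((univ.erase i).image (fun j => (Sum.inr (f, j) : FakeVert q))) := by
      rw [Finset.disjoint_left]
      rintro x hx hy
      simp only [mem_image] at hx hy
      obtain ⟨a, -, rfl⟩ := hx
      obtain ⟨b, -, hb⟩ := hy
      exact absurd hb (by simp)
    rw [himg, card_union_of_disjoint hdisj, card_image_of_injective _ Sum.inl_injective,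
      card_image_of_injective _ hinj, card_pair_mem hv.1,
      card_erase_of_mem (mem_univ i), card_univ, Fintype.card_fin]
    omega
  · rw [hdeg, if_neg hv]
    rw [Finset.card_eq_zero, Finset.filter_eq_empty_iff]
    intro x _
    cases x with
    | inl v => rw [adj_inr_inl]; tauto
    | inr p =>
      obtain ⟨g, j⟩ := p
      rw [adj_inr_inr]; tauto
lemma fakeEdge_card_edges {q : ℕ} (hq : 3 ≤ q) :
    (fakeEdge q).edgeFinset.card = (q.choose 2 - 1) ^ 2 := by
  classical
  have hhs := SimpleGraph.sum_degrees_eq_twice_card_edges (fakeEdge q)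
  rw [Fintype.sum_sum_type] at hhs
  have hc2 : (univ.filter fun u : Fin q => (u : ℕ) < 2).card = 2 := by
    have : (univ.filter fun u : Fin q => (u : ℕ) < 2)
        = {(⟨0, by omega⟩ : Fin q), ⟨1, by omega⟩} := by
      ext u
      simp only [mem_filter, mem_univ, true_and, mem_insert, mem_singleton, Fin.ext_iff,
        Fin.val_mk]
      omega
    rw [this, card_insert_of_notMem (by simp [Fin.ext_iff]), card_singleton]
  have hc2' : (univ.filter fun u : Fin q => ¬(u : ℕ) < 2).card = q - 2 := by
    have h := Finset.card_filter_add_card_filter_not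
      (s := (univ : Finset (Fin q))) (p := fun u : Fin q => (u : ℕ) < 2)
    rw [hc2, card_univ, Fintype.card_fin] at h
    omega
  have h1 : ∑ u : Fin q, (fakeEdge q).degree (Sum.inl u)
      = 2 * ((q - 2) * (q - 2)) + (q - 2) * ((q - 1) * (q - 2)) := by
    rw [Finset.sum_congr rfl (fun u _ => deg_inl hq u)]
    simp only [ite_mul]
    rw [Finset.sum_ite, Finset.sum_const, Finset.sum_const, hc2, hc2', smul_eq_mul,
      smul_eq_mul]
  have h2 : ∑ p : Sym2 (Fin q) × Fin (q - 2), (fakeEdge q).degree (Sum.inr p)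
      = ((q.choose 2 - 1) * (q - 1)) * (q - 2) := by
    rw [Fintype.sum_prod_type]
    have : ∀ f : Sym2 (Fin q), ∑ i : Fin (q - 2), (fakeEdge q).degree (Sum.inr (f, i))
        = (q - 2) * (if ValidPair q f then q - 1 else 0) := by
      intro f
      rw [Finset.sum_congr rfl (fun i _ => deg_inr hq f i), Finset.sum_const, card_univ,
        Fintype.card_fin, smul_eq_mul]
    rw [Finset.sum_congr rfl (fun f _ => this f), ← Finset.mul_sum, ← Finset.sum_filter,
      Finset.sum_const, smul_eq_mul, card_valid hq]
    ring
  rw [h1, h2] at hhs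
  have hN1 : 1 ≤ q.choose 2 := Nat.choose_pos (by omega)
  have h2N : 2 * q.choose 2 = q * (q - 1) := by
    have heven : 2 ∣ q * (q - 1) := by
      have h := (Nat.even_mul_succ_self (q - 1)).two_dvd
      rw [Nat.sub_add_cancel (by omega : 1 ≤ q)] at h
      rwa [mul_comm] at h
    rw [Nat.choose_two_right, Nat.mul_div_cancel' heven]
  obtain ⟨r, rfl⟩ : ∃ r, q = r + 3 := ⟨q - 3, by omega⟩
  zify [hN1, show 2 ≤ r + 3 by omega, show 1 ≤ r + 3 by omega] at hhs h2N ⊢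
  have h4 : (4 : ℤ) * (fakeEdge (r + 3)).edgeFinset.card
      = 4 * (((r + 3).choose 2 : ℤ) - 1) ^ 2 := by
    linear_combination (-2 : ℤ) * hhs
      + (-2 * (((r + 3).choose 2 : ℤ) - 1) - 2 * ((r : ℤ) + 1)) * h2N
  linarith [h4]
section Transfer

variable {V : Type} [Fintype V] [DecidableEq V] {q : ℕ} (φ : FakeVert q ↪ V)

noncomputable instance : DecidableRel ((fakeEdge q).map φ).Adj := Classical.decRel _

lemma edgeFinset_map_card :
    ((fakeEdge q).map φ).edgeFinset.card = (fakeEdge q).edgeFinset.card := by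
  classical
  have himg : ((fakeEdge q).map φ).edgeFinset = (fakeEdge q).edgeFinset.image (Sym2.map φ) := by
    ext g
    induction g using Sym2.ind with
    | _ a b =>
      simp only [SimpleGraph.mem_edgeFinset, SimpleGraph.mem_edgeSet, SimpleGraph.map_adj,
        mem_image]
      constructor
      · rintro ⟨a', b', hadj, rfl, rfl⟩
        exact ⟨s(a', b'), by simpa using hadj, by simp⟩
      · rintro ⟨g', hg', hmap⟩
        revert hg' hmap
        induction g' using Sym2.ind with
        | _ x y =>
          intro hg' hmap
          simp only [SimpleGraph.mem_edgeFinset, SimpleGraph.mem_edgeSet] at hg'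
          rw [Sym2.map_pair_eq, Sym2.eq_iff] at hmap
          rcases hmap with ⟨h1, h2⟩ | ⟨h1, h2⟩
          · exact ⟨x, y, hg', h1, h2⟩
          · exact ⟨y, x, hg'.symm, h2, h1⟩
  rw [himg, card_image_of_injective _ (Sym2.map.injective φ.injective)]

lemma msize_indicator_edgeSet :
    msize (Set.indicator ((fakeEdge q).map φ).edgeSet (fun _ => 1)) =
      ((fakeEdge q).map φ).edgeFinset.card := by
  classical
  unfold msize
  rw [Finset.sum_indicator_eq_sum_filter]
  rw [Finset.sum_const, smul_eq_mul, mul_one]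
  congr 1
  ext g
  simp [SimpleGraph.mem_edgeFinset]

lemma degree_map_eq (a : FakeVert q) :
    ((fakeEdge q).map φ).degree (φ a) = (fakeEdge q).degree a := by
  classical
  have himg : ((fakeEdge q).map φ).neighborFinset (φ a)
      = ((fakeEdge q).neighborFinset a).image φ := by
    ext w
    simp only [SimpleGraph.mem_neighborFinset, SimpleGraph.map_adj, mem_image]
    constructor
    · rintro ⟨a', b', hadj, ha', rfl⟩
      exact ⟨b', by rwa [φ.injective ha'] at hadj, rfl⟩
    · rintro ⟨b, hb, rfl⟩
      exact ⟨a, b, hb, rfl, rfl⟩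
  rw [SimpleGraph.degree, SimpleGraph.degree, himg,
    card_image_of_injective _ φ.injective]

lemma degree_map_zero {v : V} (hv : v ∉ Set.range φ) :
    ((fakeEdge q).map φ).degree v = 0 := by
  classical
  rw [SimpleGraph.degree, card_eq_zero, eq_empty_iff_forall_notMem]
  intro w hw
  rw [SimpleGraph.mem_neighborFinset, SimpleGraph.map_adj] at hw
  obtain ⟨a', b', -, rfl, -⟩ := hw
  exact hv ⟨a', rfl⟩

lemma mdeg_indicator_edgeSet (v : V) :
    mdeg (Set.indicator ((fakeEdge q).map φ).edgeSet (fun _ => 1)) v =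
      ((fakeEdge q).map φ).degree v := by
  classical
  unfold mdeg
  rw [Finset.sum_indicator_eq_sum_filter, Finset.sum_const, smul_eq_mul, mul_one,
    SimpleGraph.degree]
  congr 1
  ext u
  simp [SimpleGraph.mem_neighborFinset, SimpleGraph.mem_edgeSet]

end Transfer

section Single

variable {V : Type} [Fintype V] [DecidableEq V]

lemma msize_indicator_single (e : Sym2 V) :
    msize (Set.indicator {e} (fun _ => 1)) = 1 := by
  classical
  unfold msize
  rw [Finset.sum_indicator_eq_sum_filter, Finset.sum_const, smul_eq_mul, mul_one]
  have : (univ.filter fun g : Sym2 V => g ∈ ({e} : Set (Sym2 V))) = {e} := by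
    ext g; simp
  rw [this, card_singleton]

lemma mdeg_indicator_single {x y : V} (hxy : x ≠ y) (v : V) :
    mdeg (Set.indicator {s(x, y)} (fun _ => 1)) v
      = if v = x ∨ v = y then 1 else 0 := by
  classical
  unfold mdeg
  rw [Finset.sum_indicator_eq_sum_filter, Finset.sum_const, smul_eq_mul, mul_one]
  by_cases hv : v = x ∨ v = y
  · rw [if_pos hv]
    rcases hv with rfl | rfl
    · have : (univ.filter fun u : V => s(v, u) ∈ ({s(v, y)} : Set (Sym2 V))) = {y} := by
        ext u
        simp only [mem_filter, mem_univ, true_and, Set.mem_singleton_iff, mem_singleton]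
        exact Sym2.congr_right
      rw [this, card_singleton]
    · have : (univ.filter fun u : V => s(v, u) ∈ ({s(x, v)} : Set (Sym2 V))) = {x} := by
        ext u
        simp only [mem_filter, mem_univ, true_and, Set.mem_singleton_iff, mem_singleton]
        rw [Sym2.eq_swap (a := x)]
        exact Sym2.congr_right
      rw [this, card_singleton]
  · rw [if_neg hv, card_eq_zero, Finset.filter_eq_empty_iff]
    intro u _
    simp only [Set.mem_singleton_iff]
    intro hcon
    have : v ∈ s(x, y) := hcon ▸ Sym2.mem_mk_left v u
    push_neg at hv
    rcases Sym2.mem_iff.mp this with h | h <;> tauto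

end Single
section Main

variable {V : Type} [Fintype V] [DecidableEq V]

lemma fake_degree_mod {q : ℕ} (hq : 3 ≤ q) (φ : FakeVert q ↪ V) (v : V) :
    ((fakeEdge q).map φ).degree v
      ≡ (if v = φ (Sum.inl ⟨0, by omega⟩) ∨ v = φ (Sum.inl ⟨1, by omega⟩) then 1 else 0)
        [MOD q - 1] := by
  classical
  by_cases hv : v ∈ Set.range ⇑φ
  · obtain ⟨a, rfl⟩ := hv
    rw [degree_map_eq]
    cases a with
    | inl u =>
      rw [deg_inl hq u]
      by_cases hu : (u : ℕ) < 2
      · rw [if_pos hu]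
        have hor : φ (Sum.inl u) = φ (Sum.inl ⟨0, by omega⟩)
            ∨ φ (Sum.inl u) = φ (Sum.inl ⟨1, by omega⟩) := by
          rcases Nat.lt_or_ge (u : ℕ) 1 with h | h
          · left
            have : u = (⟨0, by omega⟩ : Fin q) := Fin.ext (by simp only [Fin.val_mk]; omega)
            rw [this]
          · right
            have : u = (⟨1, by omega⟩ : Fin q) := Fin.ext (by simp only [Fin.val_mk]; omega)
            rw [this]
        rw [if_pos hor]
        obtain ⟨r, rfl⟩ : ∃ r, q = r + 3 := ⟨q - 3, by omega⟩
        have key : ∀ r : ℕ, (r + 1) * (r + 1) ≡ 1 [MOD r + 2] := by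
          intro r
          have h3 : (r + 1) * (r + 1) = (r + 2) * r + 1 := by ring
          rw [h3]
          simpa using Nat.ModEq.add_right 1 (Nat.modEq_zero_iff_dvd.mpr ⟨r, rfl⟩)
        have h1 : r + 3 - 2 = r + 1 := by omega
        have h2 : r + 3 - 1 = r + 2 := by omega
        show (r + 3 - 2) * (r + 3 - 2) ≡ 1 [MOD r + 3 - 1]
        rw [h1, h2]
        exact key r
      · rw [if_neg hu]
        have hne : ¬(φ (Sum.inl u) = φ (Sum.inl ⟨0, by omega⟩)
            ∨ φ (Sum.inl u) = φ (Sum.inl ⟨1, by omega⟩)) := by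
          rintro (h | h) <;>
          · have h' := congrArg Fin.val (Sum.inl.inj (φ.injective h))
            simp only [Fin.val_mk] at h'
            omega
        rw [if_neg hne]
        exact Nat.modEq_zero_iff_dvd.mpr ⟨q - 2, rfl⟩
    | inr p =>
      obtain ⟨f, i⟩ := p
      rw [deg_inr hq f i]
      have hne : ¬(φ (Sum.inr (f, i)) = φ (Sum.inl ⟨0, by omega⟩)
          ∨ φ (Sum.inr (f, i)) = φ (Sum.inl ⟨1, by omega⟩)) := by
        rintro (h | h) <;> exact absurd (φ.injective h) (by simp)
      rw [if_neg hne]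
      by_cases hvp : ValidPair q f
      · rw [if_pos hvp]
        exact Nat.modEq_zero_iff_dvd.mpr dvd_rfl
      · rw [if_neg hvp]
  · rw [degree_map_zero φ hv]
    have hne : ¬(v = φ (Sum.inl ⟨0, by omega⟩) ∨ v = φ (Sum.inl ⟨1, by omega⟩)) := by
      rintro (rfl | rfl) <;> exact hv ⟨_, rfl⟩
    rw [if_neg hne]

end Main

/-- If the multigraph `w₁` is a `K_q`-divisibility fixer, `e` is an edge of
`w₁`, and `X` is a copy of `FakeEdge_q(e)` (embedded via `φ`, with the root
pair mapped to the ends of `e`) that is edge-disjoint from `w₁`, then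
`F₂ := (F₁ − e) ∪ X` is also a `K_q`-divisibility fixer. -/
theorem divFixer_replace_fakeEdge (q : ℕ) (hq : 3 ≤ q)
    (w₁ : Sym2 V → ℕ) (hl₁ : Loopless w₁) (hfix : IsMultiDivFixer q w₁)
    (e : Sym2 V) (he : 1 ≤ w₁ e)
    (φ : FakeVert q ↪ V)
    (hroot : e = s(φ (Sum.inl ⟨0, by omega⟩), φ (Sum.inl ⟨1, by omega⟩)))
    (hdisj : ∀ f ∈ ((fakeEdge q).map φ).edgeSet, w₁ f = 0) :
    IsMultiDivFixer q (fun f =>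
      w₁ f - Set.indicator {e} (fun _ => 1) f
        + Set.indicator ((fakeEdge q).map φ).edgeSet (fun _ => 1) f) := by
  
  classical
  intro m hm d hd hsum
  obtain ⟨w', hle, hms, hmd⟩ := hfix m hm d hd hsum
  rcases lt_or_eq_of_le (hle e) with hlt | heq
  · refine ⟨w', fun f => ?_, hms, hmd⟩
    show w' f ≤ w₁ f - Set.indicator {e} (fun _ => 1) f
        + Set.indicator ((fakeEdge q).map φ).edgeSet (fun _ => 1) f
    by_cases hf : f = e
    · subst hf
      rw [Set.indicator_of_mem (Set.mem_singleton _)]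
      omega
    · rw [Set.indicator_of_notMem (by simpa using hf : f ∉ ({e} : Set (Sym2 V)))]
      have := hle f
      omega
  · -- w' uses e at full multiplicity; reroute through the fake edge.
    have hx01 : φ (Sum.inl (⟨0, by omega⟩ : Fin q)) ≠ φ (Sum.inl (⟨1, by omega⟩ : Fin q)) := by
      intro h
      have := congrArg Fin.val (Sum.inl.inj (φ.injective h))
      simpa using this
    have hpt : ∀ f, (w' f - Set.indicator {e} (fun _ => 1) f
          + Set.indicator ((fakeEdge q).map φ).edgeSet (fun _ => 1) f)
          + Set.indicator {e} (fun _ => 1) f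
        = w' f + Set.indicator ((fakeEdge q).map φ).edgeSet (fun _ => 1) f := by
      intro f
      by_cases hf : f = e
      · subst hf
        rw [Set.indicator_of_mem (Set.mem_singleton _)]
        omega
      · rw [Set.indicator_of_notMem (by simpa using hf : f ∉ ({e} : Set (Sym2 V)))]
        omega
    refine ⟨fun f => w' f - Set.indicator {e} (fun _ => 1) f
        + Set.indicator ((fakeEdge q).map φ).edgeSet (fun _ => 1) f,
      fun f => ?_, ?_, ?_⟩
    · show w' f - Set.indicator {e} (fun _ => 1) f
          + Set.indicator ((fakeEdge q).map φ).edgeSet (fun _ => 1) f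
        ≤ w₁ f - Set.indicator {e} (fun _ => 1) f
          + Set.indicator ((fakeEdge q).map φ).edgeSet (fun _ => 1) f
      have := hle f
      omega
    · -- edge count
      have hs : msize (fun f => w' f - Set.indicator {e} (fun _ => 1) f
            + Set.indicator ((fakeEdge q).map φ).edgeSet (fun _ => 1) f)
            + msize (Set.indicator {e} (fun _ => (1 : ℕ)))
          = msize w'
            + msize (Set.indicator ((fakeEdge q).map φ).edgeSet (fun _ => (1 : ℕ))) := by
        unfold msize
        rw [← Finset.sum_add_distrib, ← Finset.sum_add_distrib]
        exact Finset.sum_congr rfl (fun f _ => hpt f)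
      rw [msize_indicator_single] at hs
      have hXc : msize (Set.indicator ((fakeEdge q).map φ).edgeSet (fun _ => (1 : ℕ)))
          = (q.choose 2 - 1) ^ 2 := by
        rw [msize_indicator_edgeSet, edgeFinset_map_card, fakeEdge_card_edges hq]
      have hN3 : 3 ≤ q.choose 2 := by
        calc 3 = Nat.choose 3 2 := by decide
          _ ≤ q.choose 2 := Nat.choose_le_choose 2 hq
      obtain ⟨t, ht⟩ : ∃ t, q.choose 2 = t + 2 := ⟨q.choose 2 - 2, by omega⟩
      have hsq : (q.choose 2 - 1) ^ 2 = q.choose 2 * t + 1 := by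
        have h1 : q.choose 2 - 1 = t + 1 := by omega
        rw [h1, ht]; ring
      rw [hXc, hsq] at hs
      have hfin : msize (fun f => w' f - Set.indicator {e} (fun _ => 1) f
            + Set.indicator ((fakeEdge q).map φ).edgeSet (fun _ => 1) f) + 1
          ≡ m + 1 [MOD q.choose 2] := by
        calc msize (fun f => w' f - Set.indicator {e} (fun _ => 1) f
              + Set.indicator ((fakeEdge q).map φ).edgeSet (fun _ => 1) f) + 1
            = msize w' + (q.choose 2 * t + 1) := hs
          _ ≡ m + (q.choose 2 * t + 1) [MOD q.choose 2] := hms.add_right _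
          _ = (m + 1) + q.choose 2 * t := by ring
          _ ≡ (m + 1) + 0 [MOD q.choose 2] :=
              Nat.ModEq.add_left _ (Nat.modEq_zero_iff_dvd.mpr ⟨t, rfl⟩)
          _ = m + 1 := by ring
      exact Nat.ModEq.add_right_cancel' 1 hfin
    · -- degrees
      intro v
      have hptd : mdeg (fun f => w' f - Set.indicator {e} (fun _ => 1) f
            + Set.indicator ((fakeEdge q).map φ).edgeSet (fun _ => 1) f) v
            + mdeg (Set.indicator {e} (fun _ => (1 : ℕ))) v
          = mdeg w' v
            + mdeg (Set.indicator ((fakeEdge q).map φ).edgeSet (fun _ => (1 : ℕ))) v := by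
        unfold mdeg
        rw [← Finset.sum_add_distrib, ← Finset.sum_add_distrib]
        exact Finset.sum_congr rfl (fun u _ => hpt s(v, u))
      have hinde : mdeg (Set.indicator {e} (fun _ => (1 : ℕ))) v
          = if v = φ (Sum.inl ⟨0, by omega⟩) ∨ v = φ (Sum.inl ⟨1, by omega⟩)
              then 1 else 0 := by
        rw [hroot]
        exact mdeg_indicator_single hx01 v
      have hdeg := fake_degree_mod hq φ v
      have hfin : mdeg (fun f => w' f - Set.indicator {e} (fun _ => 1) f
            + Set.indicator ((fakeEdge q).map φ).edgeSet (fun _ => 1) f) v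
            + mdeg (Set.indicator {e} (fun _ => (1 : ℕ))) v
          ≡ d v + mdeg (Set.indicator {e} (fun _ => (1 : ℕ))) v [MOD q - 1] := by
        rw [hptd, mdeg_indicator_edgeSet, hinde]
        exact Nat.ModEq.add (hmd v) hdeg
      exact Nat.ModEq.add_right_cancel' _ hfin
end

section
/- Let q ≥ 3 be an integer and S a 2-element vertex set. If F = FakeEdge_q(S), then e(F) ≡ +1 (mod C(q,2)), d_F(v) ≡ +1 (mod q−1) for every v ∈ S, and d_F(v) ≡ 0 (mod q−1) for every v ∈ V(F)∖S. -/
/-!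
A core vertex lies in `q - 2` anti-edges if it is a root and in `q - 1` otherwise, and each
anti-edge contributes `q - 2` neighbours, so the core degrees are `(q - 2)² ≡ 1` and
`(q - 1)(q - 2) ≡ 0 (mod q - 1)`; a new vertex of an anti-edge has degree `q - 1`.
With `N = C(q,2) - 1` anti-edges, the handshake lemma gives
`2 e(F) = 2N(q - 2) + N(q - 2)(q - 1) = N(q - 2)(q + 1) = 2N²`, and `N² ≡ 1 (mod N + 1)`.
-/

open Finset SimpleGraph

theorem Nat.two_mul_choose_two_sub_one {q : ℕ} (hq : 2 ≤ q) :
    2 * (q.choose 2 - 1) = (q - 2) * (q + 1) := by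
  obtain ⟨r, rfl⟩ : ∃ r, q = r + 2 := ⟨q - 2, by omega⟩
  have h := Nat.add_one_mul_choose_eq (r + 1) 1
  rw [Nat.choose_one_right] at h
  rw [Nat.mul_sub, mul_comm 2, ← h, Nat.add_sub_cancel,
    show (r + 1 + 1) * (r + 1) = r * (r + 2 + 1) + 2 * 1 by ring, Nat.add_sub_cancel]

theorem Nat.sub_one_sq_modEq_one {n : ℕ} (hn : 1 ≤ n) : (n - 1) ^ 2 ≡ 1 [MOD n] := by
  obtain ⟨m, rfl⟩ : ∃ m, n = m + 1 := ⟨n - 1, by omega⟩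
  rw [Nat.add_sub_cancel, Nat.modEq_iff_dvd]
  exact ⟨1 - m, by push_cast; ring⟩

theorem SimpleGraph.sum_ncard_neighborSet {V : Type*} [Fintype V] (G : SimpleGraph V) :
    ∑ v, (G.neighborSet v).ncard = 2 * G.edgeSet.ncard := by
  classical
  rw [← coe_edgeFinset, Set.ncard_coe_finset, ← sum_degrees_eq_twice_card_edges]
  refine Finset.sum_congr rfl fun v _ => ?_
  rw [← card_neighborSet_eq_degree, ← Nat.card_eq_fintype_card, Nat.card_coe_set_eq]

theorem Fin.ncard_setOf_le_val (n m : ℕ) : {w : Fin n | m ≤ w.val}.ncard = n - m := by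
  classical
  have h := Set.ncard_compl {w : Fin n | w.val < m}
  rw [Set.compl_ofPred] at h
  simp only [not_lt, Set.ncard_eq_toFinset_card', Set.toFinset_ofPred, Fin.card_filter_val_lt,
    Nat.card_eq_fintype_card, Fintype.card_fin] at h ⊢
  omega

variable {q : ℕ}

theorem fakeEdge_not_adj_inl_inl (u v : Fin q) : ¬(fakeEdge q).Adj (.inl u) (.inl v) := by
  simp [fakeEdge]

theorem fakeEdge_adj_inl_inr (u : Fin q) (f : Sym2 (Fin q)) (i : Fin (q - 2)) :
    (fakeEdge q).Adj (.inl u) (.inr (f, i)) ↔ ValidPair q f ∧ u ∈ f := by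
  simp [fakeEdge]

theorem fakeEdge_adj_inr_inr (f g : Sym2 (Fin q)) (i j : Fin (q - 2)) :
    (fakeEdge q).Adj (.inr (f, i)) (.inr (g, j)) ↔ f = g ∧ ValidPair q f ∧ i ≠ j := by
  simp only [fakeEdge, fromRel_adj]
  grind

theorem validPair_mk_iff {v w : Fin q} :
    ValidPair q s(v, w) ↔ v ≠ w ∧ (2 ≤ v.val ∨ 2 ≤ w.val) := by
  simp [ValidPair]

/-- The pairs of core vertices that carry an anti-edge, as a graph on the core: `K_q` minus the
root edge. -/
def validPairGraph (q : ℕ) : SimpleGraph (Fin q) := fromEdgeSet {f | ValidPair q f}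

theorem edgeSet_validPairGraph : (validPairGraph q).edgeSet = {f | ValidPair q f} := by
  rw [validPairGraph, edgeSet_fromEdgeSet, sdiff_eq_left, Set.disjoint_left]
  exact fun f hf hdiag => hf.1 hdiag

theorem validPairGraph_adj {v w : Fin q} :
    (validPairGraph q).Adj v w ↔ v ≠ w ∧ (2 ≤ v.val ∨ 2 ≤ w.val) := by
  rw [← mem_edgeSet, edgeSet_validPairGraph, Set.mem_ofPred_eq, validPair_mk_iff]

theorem ncard_neighborSet_validPairGraph_of_le_one {v : Fin q} (hv : v.val ≤ 1) :
    ((validPairGraph q).neighborSet v).ncard = q - 2 := by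
  convert Fin.ncard_setOf_le_val q 2 using 2
  ext w
  simp only [mem_neighborSet, validPairGraph_adj, Set.mem_ofPred_eq]
  grind

theorem ncard_neighborSet_validPairGraph_of_two_le {v : Fin q} (hv : 2 ≤ v.val) :
    ((validPairGraph q).neighborSet v).ncard = q - 1 := by
  have : (validPairGraph q).neighborSet v = {v}ᶜ := by
    ext w
    simp only [mem_neighborSet, validPairGraph_adj, Set.mem_compl_singleton_iff]
    grind
  rw [this, Set.ncard_compl, Set.ncard_singleton, Nat.card_eq_fintype_card, Fintype.card_fin]

theorem ncard_edgeSet_validPairGraph (hq : 2 ≤ q) :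
    (validPairGraph q).edgeSet.ncard = q.choose 2 - 1 := by
  set root : Sym2 (Fin q) := s(⟨0, by omega⟩, ⟨1, by omega⟩)
  have h : (validPairGraph q).edgeSet = Sym2.diagSetᶜ \ {root} := by
    ext f
    induction f using Sym2.ind with
    | _ a b =>
      simp only [edgeSet_validPairGraph, Set.mem_ofPred_eq, validPair_mk_iff, Set.mem_sdiff,
        Set.mem_compl_iff, Sym2.mem_diagSet, Set.mem_singleton_iff, root,
        Sym2.eq_iff, Sym2.mk_isDiag_iff, ne_eq, Fin.ext_iff]
      omega
  rw [h, Set.ncard_sdiff_singleton_of_mem (by simp [root]), Sym2.ncard_diagSet_compl,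
    Nat.card_eq_fintype_card, Fintype.card_fin]

theorem neighborSet_fakeEdge_inl (v : Fin q) :
    (fakeEdge q).neighborSet (.inl v) =
      .inr '' ((validPairGraph q).incidenceSet v ×ˢ Set.univ) := by
  ext (u | ⟨f, i⟩)
  · simp [fakeEdge_not_adj_inl_inl]
  · simp [fakeEdge_adj_inl_inr, incidenceSet, edgeSet_validPairGraph]

theorem ncard_neighborSet_fakeEdge_inl (v : Fin q) :
    ((fakeEdge q).neighborSet (.inl v)).ncard =
      ((validPairGraph q).neighborSet v).ncard * (q - 2) := by
  rw [neighborSet_fakeEdge_inl, Set.ncard_image_of_injective _ Sum.inr_injective, Set.ncard_prod,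
    Set.ncard_univ, Nat.card_eq_fintype_card, Fintype.card_fin, ← Nat.card_coe_set_eq,
    Nat.card_congr ((validPairGraph q).incidenceSetEquivNeighborSet v), Nat.card_coe_set_eq]

theorem neighborSet_fakeEdge_inr_mk {a b : Fin q} (h : ValidPair q s(a, b)) (i : Fin (q - 2)) :
    (fakeEdge q).neighborSet (.inr (s(a, b), i)) =
      {.inl a, .inl b} ∪ .inr '' (Prod.mk s(a, b) '' {i}ᶜ) := by
  ext (u | ⟨f, j⟩)
  · simp [adj_comm, fakeEdge_adj_inl_inr, h]
  · simp [fakeEdge_adj_inr_inr, h, ne_comm, and_comm]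

theorem neighborSet_fakeEdge_inr_of_not_validPair {f : Sym2 (Fin q)} (h : ¬ValidPair q f)
    (i : Fin (q - 2)) : (fakeEdge q).neighborSet (.inr (f, i)) = ∅ := by
  ext (u | ⟨g, j⟩)
  · simp [adj_comm, fakeEdge_adj_inl_inr, h]
  · simp [fakeEdge_adj_inr_inr, h]

open scoped Classical in
theorem ncard_neighborSet_fakeEdge_inr (f : Sym2 (Fin q)) (i : Fin (q - 2)) :
    ((fakeEdge q).neighborSet (.inr (f, i))).ncard = if ValidPair q f then q - 1 else 0 := by
  split_ifs with h
  · induction f using Sym2.ind with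
    | _ a b =>
      have hab : a ≠ b := (validPair_mk_iff.mp h).1
      have hi := i.isLt
      rw [neighborSet_fakeEdge_inr_mk h, Set.ncard_union_eq (by simp), Set.ncard_pair (by simpa),
        Set.ncard_image_of_injective _ Sum.inr_injective,
        Set.ncard_image_of_injective _ (Prod.mk_right_injective _), Set.ncard_compl,
        Set.ncard_singleton, Nat.card_eq_fintype_card, Fintype.card_fin]
      omega
  · rw [neighborSet_fakeEdge_inr_of_not_validPair h, Set.ncard_empty]

theorem ncard_edgeSet_fakeEdge (hq : 2 ≤ q) :
    (fakeEdge q).edgeSet.ncard = (q.choose 2 - 1) ^ 2 := by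
  classical
  have hvalid : #{f : Sym2 (Fin q) | ValidPair q f} = q.choose 2 - 1 := by
    rw [← ncard_edgeSet_validPairGraph hq, edgeSet_validPairGraph, ← Set.ncard_coe_finset]
    simp
  have hcore : ∑ v : Fin q, ((fakeEdge q).neighborSet (.inl v)).ncard =
      2 * (q.choose 2 - 1) * (q - 2) := by
    simp_rw [ncard_neighborSet_fakeEdge_inl, ← Finset.sum_mul, sum_ncard_neighborSet,
      ncard_edgeSet_validPairGraph hq]
  have hanti : ∑ p : Sym2 (Fin q) × Fin (q - 2), ((fakeEdge q).neighborSet (.inr p)).ncard =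
      (q.choose 2 - 1) * (q - 2) * (q - 1) := by
    simp_rw [Fintype.sum_prod_type, ncard_neighborSet_fakeEdge_inr, Finset.sum_const, card_univ,
      Fintype.card_fin, smul_eq_mul, ← Finset.mul_sum, Finset.sum_ite, sum_const_zero, sum_const,
      smul_eq_mul, hvalid]
    ring
  have handshake := (fakeEdge q).sum_ncard_neighborSet
  rw [Fintype.sum_sum_type, hcore, hanti] at handshake
  refine Nat.eq_of_mul_eq_mul_left two_pos ?_
  calc 2 * (fakeEdge q).edgeSet.ncard
      = 2 * (q.choose 2 - 1) * (q - 2) + (q.choose 2 - 1) * (q - 2) * (q - 1) := handshake.symm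
    _ = (q.choose 2 - 1) * ((q - 2) * (q + 1)) := by
      rw [show q - 1 = q - 2 + 1 by omega, show q + 1 = q - 2 + 3 by omega]
      ring
    _ = 2 * (q.choose 2 - 1) ^ 2 := by
      rw [← Nat.two_mul_choose_two_sub_one hq]
      ring

/-- Divisibility properties of the fake edge: for `q ≥ 3` and
`F = FakeEdge_q(S)`, `e(F) ≡ 1 (mod C(q,2))`, `d_F(v) ≡ 1 (mod q-1)` for the
two root vertices `v ∈ S`, and `d_F(v) ≡ 0 (mod q-1)` for every other vertex
of `F`. -/
theorem fakeEdge_divisibility (q : ℕ) (hq : 3 ≤ q) :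
    ((fakeEdge q).edgeSet.ncard ≡ 1 [MOD q.choose 2]) ∧
    (∀ v : Fin q, v.val ≤ 1 →
      ((fakeEdge q).neighborSet (Sum.inl v)).ncard ≡ 1 [MOD q - 1]) ∧
    (∀ v : Fin q, 2 ≤ v.val →
      ((fakeEdge q).neighborSet (Sum.inl v)).ncard ≡ 0 [MOD q - 1]) ∧
    (∀ x : Sym2 (Fin q) × Fin (q - 2),
      ((fakeEdge q).neighborSet (Sum.inr x)).ncard ≡ 0 [MOD q - 1]) := by
  refine ⟨?_, fun v hv => ?_, fun v hv => ?_, fun ⟨f, i⟩ => ?_⟩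
  · rw [ncard_edgeSet_fakeEdge (by omega)]
    exact Nat.sub_one_sq_modEq_one (Nat.choose_pos (by omega))
  · rw [ncard_neighborSet_fakeEdge_inl, ncard_neighborSet_validPairGraph_of_le_one hv, ← sq,
      show q - 2 = q - 1 - 1 by omega]
    exact Nat.sub_one_sq_modEq_one (by omega)
  · rw [ncard_neighborSet_fakeEdge_inl, ncard_neighborSet_validPairGraph_of_two_le hv]
    exact Nat.modEq_zero_iff_dvd.mpr (dvd_mul_right _ _)
  · rw [ncard_neighborSet_fakeEdge_inr]
    split_ifs
    · exact Nat.modEq_zero_iff_dvd.mpr dvd_rfl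
    · rfl
end

section
/- Let q ≥ 3 be an integer and let X be a (simple) graph. If A is a K_q-omni-absorber for the multigraph q(q−1)∗X (the multigraph obtained from X by replacing each edge with q(q−1) parallel edges), then A is a fractional K_q-omni-absorber for X. -/
variable {V : Type} [Fintype V] [DecidableEq V]

/-- The edges spanned by a clique with vertex set `S`. -/
def cliqueEdges (S : Finset V) : Set (Sym2 V) :=
  {f | ¬f.IsDiag ∧ ∀ v ∈ f, v ∈ S}

/-- Counting an indexed family of sets as a real-valued sum of indicators. -/
private lemma ncard_eq_sum_ite {ι : Type} [Fintype ι] (P : ι → Prop) [DecidablePred P] :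
    (∑ i : ι, if P i then (1 : ℝ) else 0) = (({i : ι | P i}).ncard : ℝ) := by
  rw [Set.ncard_eq_toFinset_card' {i : ι | P i}, Set.toFinset_setOf]
  rw [Finset.sum_boole]

/-- The Bernoulli-product convex decomposition of a `[0,1]`-vector into
indicator vectors: selecting the total weight of subsets containing a given
element recovers the value at that element. -/
private lemma sum_powerset_select {α : Type} [DecidableEq α] (u : Finset α) (g : α → ℝ)
    (a : α) (ha : a ∈ u) :
    (∑ S ∈ u.powerset,
        if a ∈ S then (∏ f ∈ S, g f) * ∏ f ∈ u \ S, (1 - g f) else 0) = g a := by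
  classical
  have hu : u = insert a (u.erase a) := (Finset.insert_erase ha).symm
  have hna : a ∉ u.erase a := Finset.notMem_erase a u
  rw [hu, Finset.sum_powerset_insert hna]
  have h1 : (∑ S ∈ (u.erase a).powerset,
      if a ∈ S then (∏ f ∈ S, g f) * ∏ f ∈ insert a (u.erase a) \ S, (1 - g f) else 0) = 0 := by
    apply Finset.sum_eq_zero
    intro S hS
    have : a ∉ S := fun h => hna (Finset.mem_powerset.mp hS h)
    simp [this]
  rw [h1, zero_add]
  have h2 : ∀ S ∈ (u.erase a).powerset,
      (if a ∈ insert a S then (∏ f ∈ insert a S, g f) *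
          ∏ f ∈ insert a (u.erase a) \ insert a S, (1 - g f) else 0)
        = g a * ((∏ f ∈ S, g f) * ∏ f ∈ (u.erase a) \ S, (1 - g f)) := by
    intro S hS
    have haS : a ∉ S := fun h => hna (Finset.mem_powerset.mp hS h)
    have hdiff : insert a (u.erase a) \ insert a S = (u.erase a) \ S := by
      ext x
      simp only [Finset.mem_sdiff, Finset.mem_insert]
      constructor
      · rintro ⟨hx1 | hx1, hx2⟩
        · exact absurd (Or.inl hx1) hx2
        · exact ⟨hx1, fun h => hx2 (Or.inr h)⟩
      · rintro ⟨hx1, hx2⟩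
        refine ⟨Or.inr hx1, ?_⟩
        rintro (rfl | h)
        · exact hna hx1
        · exact hx2 h
    rw [if_pos (Finset.mem_insert_self a S), Finset.prod_insert haS, hdiff]
    ring
  rw [Finset.sum_congr rfl h2, ← Finset.mul_sum]
  have h3 : (∑ S ∈ (u.erase a).powerset,
      (∏ f ∈ S, g f) * ∏ f ∈ (u.erase a) \ S, (1 - g f)) = 1 := by
    rw [← Finset.prod_add]
    simp
  rw [h3, mul_one]

/-- If `A` is a `K_q`-omni-absorber for the multigraph `q(q-1)∗X` (with
decomposition family the `q`-cliques `Hfam i` of `X ⊔ A`, each containing at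
most one edge of `X`), then `A` is a fractional `K_q`-omni-absorber for `X`.

Multigraphs on `V` are encoded by edge-multiplicity functions `Sym2 V → ℕ`;
the multigraph `q(q-1)∗X` is `f ↦ q(q-1)·1_{E(X)}(f)`.  The omni-absorber
hypothesis says: for every `K_q`-divisible sub-multigraph `wL` of `q(q-1)∗X`
there is a subfamily `𝒬` of the decomposition family such that each pair `f`
is covered by cliques of `𝒬` exactly `wL f + 1_{E(A)}(f)` times.  The
conclusion is the fractional omni-absorber property. -/
theorem omniAbsorber_fractional (q : ℕ) (hq : 3 ≤ q)
    (X A : SimpleGraph V) {ι : Type} [Fintype ι] (Hfam : ι → Finset V)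
    (hdisj : Disjoint X.edgeSet A.edgeSet)
    (hclique : ∀ i, (X ⊔ A).IsNClique q (Hfam i))
    (hone : ∀ i, (cliqueEdges (Hfam i) ∩ X.edgeSet).ncard ≤ 1)
    (homni : ∀ wL : Sym2 V → ℕ,
      (∀ f, wL f ≤ q * (q - 1) * Set.indicator X.edgeSet (fun _ => 1) f) →
      q.choose 2 ∣ (∑ f : Sym2 V, wL f) →
      (∀ v : V, (q - 1) ∣ (∑ u : V, wL s(v, u))) →
      ∃ 𝒬 : Set ι, ∀ f : Sym2 V,
        ({i : ι | i ∈ 𝒬 ∧ f ∈ cliqueEdges (Hfam i)}).ncard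
          = wL f + Set.indicator A.edgeSet (fun _ => 1) f) :
    ∀ φ : Sym2 V → ℝ, (∀ f ∈ X.edgeSet, φ f ∈ Set.Icc (0 : ℝ) 1) →
      ∃ ψ : ι → ℝ, (∀ i, ψ i ∈ Set.Icc (0 : ℝ) 1) ∧
        (∀ f ∈ X.edgeSet,
          (∑ i : ι, Set.indicator (cliqueEdges (Hfam i)) (fun _ => ψ i) f) = φ f) ∧
        (∀ f ∈ A.edgeSet,
          (∑ i : ι, Set.indicator (cliqueEdges (Hfam i)) (fun _ => ψ i) f) = 1) := by
  classical
  intro φ hφ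
  set m : ℕ := q * (q - 1) with hmdef
  have hm0 : 0 < m := Nat.mul_pos (by omega) (by omega)
  have hmR : (0 : ℝ) < (m : ℝ) := by exact_mod_cast hm0
  have hmR1 : (1 : ℝ) ≤ (m : ℝ) := by exact_mod_cast hm0
  have hchoose : q.choose 2 ∣ m := by
    refine ⟨2, ?_⟩
    rw [Nat.choose_two_right, hmdef]
    have heven : 2 ∣ q * (q - 1) := by
      rcases Nat.even_or_odd q with h | h
      · exact Dvd.dvd.mul_right h.two_dvd _
      · have : Even (q - 1) := by
          rcases h with ⟨k, hk⟩; exact ⟨k, by omega⟩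
        exact Dvd.dvd.mul_left this.two_dvd _
      
    omega
  have hq1dvd : (q - 1) ∣ m := dvd_mul_left _ _
  -- the finset of edges of X
  set U : Finset (Sym2 V) := Finset.univ.filter (· ∈ X.edgeSet) with hUdef
  have hU : ∀ f, f ∈ U ↔ f ∈ X.edgeSet := by
    intro f; simp [hUdef]
  -- the normalized target weights
  set g : Sym2 V → ℝ := fun f => φ f / m with hgdef
  have hg01 : ∀ f ∈ U, 0 ≤ g f ∧ g f ≤ 1 := by
    intro f hf
    obtain ⟨h0, h1⟩ := hφ f ((hU f).mp hf)
    constructor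
    · exact div_nonneg h0 hmR.le
    · rw [div_le_one hmR]; linarith
  -- apply the omni-absorber to each scaled indicator weight m · 1_{S ∩ U}
  have key : ∀ S : Finset (Sym2 V), ∃ 𝒬 : Set ι, ∀ f : Sym2 V,
      ({i : ι | i ∈ 𝒬 ∧ f ∈ cliqueEdges (Hfam i)}).ncard
        = (if f ∈ S ∩ U then m else 0) + Set.indicator A.edgeSet (fun _ => 1) f := by
    intro S
    refine homni (fun f => if f ∈ S ∩ U then m else 0) ?_ ?_ ?_
    · intro f
      by_cases hf : f ∈ S ∩ U
      · have hfX : f ∈ X.edgeSet := (hU f).mp (Finset.mem_inter.mp hf).2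
        simp only [if_pos hf, Set.indicator_of_mem hfX, mul_one, le_refl]
      · simp only [if_neg hf]; exact Nat.zero_le _
    · refine Finset.dvd_sum fun f _ => ?_
      by_cases hf : f ∈ S ∩ U
      · rw [if_pos hf]; exact hchoose
      · rw [if_neg hf]; exact dvd_zero _
    · intro v
      refine Finset.dvd_sum fun u _ => ?_
      by_cases hf : s(v, u) ∈ S ∩ U
      · simp only [if_pos hf]; exact hq1dvd
      · simp only [if_neg hf]; exact dvd_zero _
  choose Q hQ using key
  -- the Bernoulli-product weights
  set lam : Finset (Sym2 V) → ℝ :=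
    fun S => (∏ f ∈ S, g f) * ∏ f ∈ U \ S, (1 - g f) with hlamdef
  have hlam0 : ∀ S ∈ U.powerset, 0 ≤ lam S := by
    intro S hS
    have hSU := Finset.mem_powerset.mp hS
    apply mul_nonneg
    · exact Finset.prod_nonneg fun f hf => (hg01 f (hSU hf)).1
    · exact Finset.prod_nonneg fun f hf => by
        have := (hg01 f (Finset.mem_sdiff.mp hf).1).2; linarith
  have hlamsum : (∑ S ∈ U.powerset, lam S) = 1 := by
    rw [hlamdef, ← Finset.prod_add]
    simp
  have hlamsel : ∀ a ∈ U, (∑ S ∈ U.powerset, if a ∈ S then lam S else 0) = g a :=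
    fun a ha => sum_powerset_select U g a ha
  -- the fractional decomposition
  set ψ : ι → ℝ := fun i => ∑ S ∈ U.powerset, lam S * (if i ∈ Q S then 1 else 0)
    with hψdef
  -- the coverage computation
  have hcover : ∀ f : Sym2 V,
      (∑ i : ι, Set.indicator (cliqueEdges (Hfam i)) (fun _ => ψ i) f)
        = ∑ S ∈ U.powerset, lam S *
            (((if f ∈ S ∩ U then m else 0) + Set.indicator A.edgeSet (fun _ => 1) f : ℕ) : ℝ) := by
    intro f
    have step1 : ∀ i : ι, Set.indicator (cliqueEdges (Hfam i)) (fun _ => ψ i) f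
        = ∑ S ∈ U.powerset, lam S * (if i ∈ Q S ∧ f ∈ cliqueEdges (Hfam i) then 1 else 0) := by
      intro i
      rw [Set.indicator_apply]
      by_cases hf : f ∈ cliqueEdges (Hfam i)
      · rw [if_pos hf, hψdef]
        refine Finset.sum_congr rfl fun S _ => ?_
        by_cases hi : i ∈ Q S <;> simp [hi, hf]
      · rw [if_neg hf]
        refine (Finset.sum_eq_zero fun S _ => ?_).symm
        simp [hf]
    rw [Finset.sum_congr rfl fun i _ => step1 i, Finset.sum_comm]
    refine Finset.sum_congr rfl fun S _ => ?_
    rw [← Finset.mul_sum,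
      ncard_eq_sum_ite (fun i => i ∈ Q S ∧ f ∈ cliqueEdges (Hfam i)), hQ S f]
  refine ⟨ψ, ?_, ?_, ?_⟩
  · intro i
    constructor
    · exact Finset.sum_nonneg fun S hS => mul_nonneg (hlam0 S hS)
        (by by_cases h : i ∈ Q S <;> simp [h])
    · calc (∑ S ∈ U.powerset, lam S * (if i ∈ Q S then 1 else 0))
          ≤ ∑ S ∈ U.powerset, lam S := by
            refine Finset.sum_le_sum fun S hS => ?_
            by_cases h : i ∈ Q S <;> simp [h, hlam0 S hS]
      _ = 1 := hlamsum
  · intro f hfX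
    have hfU : f ∈ U := (hU f).mpr hfX
    have hfA : f ∉ A.edgeSet := fun h => (hdisj.le_bot ⟨hfX, h⟩).elim
    rw [hcover f]
    have : (∑ S ∈ U.powerset, lam S *
        (((if f ∈ S ∩ U then m else 0) + Set.indicator A.edgeSet (fun _ => 1) f : ℕ) : ℝ))
        = ∑ S ∈ U.powerset, (m : ℝ) * (if f ∈ S then lam S else 0) := by
      refine Finset.sum_congr rfl fun S _ => ?_
      rw [Set.indicator_of_notMem hfA]
      by_cases hfS : f ∈ S
      · rw [if_pos (Finset.mem_inter.mpr ⟨hfS, hfU⟩), if_pos hfS]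
        push_cast; ring
      · rw [if_neg (fun h => hfS (Finset.mem_inter.mp h).1), if_neg hfS]
        push_cast; ring
    rw [this, ← Finset.mul_sum, hlamsel f hfU, hgdef]
    field_simp
  · intro f hfA
    have hfX : f ∉ X.edgeSet := fun h => (hdisj.le_bot ⟨h, hfA⟩).elim
    have hfU : f ∉ U := fun h => hfX ((hU f).mp h)
    rw [hcover f]
    have : (∑ S ∈ U.powerset, lam S *
        (((if f ∈ S ∩ U then m else 0) + Set.indicator A.edgeSet (fun _ => 1) f : ℕ) : ℝ))
        = ∑ S ∈ U.powerset, lam S := by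
      refine Finset.sum_congr rfl fun S _ => ?_
      rw [if_neg (fun h => hfU (Finset.mem_inter.mp h).2), Set.indicator_of_mem hfA]
      norm_num
    rw [this, hlamsum]
end

section
/- Let q > r ≥ 1 be integers and let e and J be disjoint sets with |e| = r and |J| = q. Let G be the complete r-uniform hypergraph on vertex set e ∪ J. There exists a function ψ from the q-element subsets of V(G) to the reals such that: (i) for every edge e' of G, the sum of ψ(H) over all q-subsets H containing e' equals 1 if e' = e and 0 otherwise; and (ii) for every q-subset H, |ψ(H)| ≤ 2^{r−j}·(r−j)! / C(q−r+j, j) ≤ 2^r·r!, where j := |e ∩ H|. -/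
/-!
Put `n = q - r` and `ψ H = c (|e ∩ H|)`. For an `r`-set `e'` with `i = |e ∩ e'|`, the `q`-sets
`H ⊇ e'` with `|e ∩ H| = k` are obtained by leaving out `r - k` vertices of `e \ e'` and `k`
vertices of `J \ e'`, so there are `C(r-i, r-k) C(n+i, k)` of them. Condition (i) thus becomes
the triangular system `∑_{i ≤ k ≤ r} C(r-i, r-k) C(n+i, k) c k = [i = r]`, solved downwards
from `c r = 1 / C(q, r)`. Since `C(r-i, r-k) (r-k)! ≤ (r-i)!` and `C(n+i, k) ≤ C(n+k, k)`,
downward induction gives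
`|c i| C(n+i, i) ≤ (r-i)! (1 + ∑_{i < k ≤ r} 2^(r-k)) = 2^(r-i) (r-i)!`.
-/

open Finset
open scoped Nat

noncomputable def gadgetCoeff (n r j : ℕ) : ℝ :=
  ((if j = r then 1 else 0) -
      ∑ k ∈ (Ioc j r).attach,
        ((r - j).choose (r - k) * (n + j).choose k : ℕ) * gadgetCoeff n r k)
    / (n + j).choose j
termination_by r - j
decreasing_by have := mem_Ioc.mp k.2; omega

lemma gadgetCoeff_eq (n r j : ℕ) :
    gadgetCoeff n r j = ((if j = r then 1 else 0) -
      ∑ k ∈ Ioc j r, ((r - j).choose (r - k) * (n + j).choose k : ℕ) * gadgetCoeff n r k)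
        / (n + j).choose j := by
  rw [gadgetCoeff.eq_1, sum_attach (Ioc j r) fun k =>
    (((r - j).choose (r - k) * (n + j).choose k : ℕ) : ℝ) * gadgetCoeff n r k]

lemma sum_choose_mul_gadgetCoeff (n r j : ℕ) :
    ∑ k ∈ Icc j r, ((r - j).choose (r - k) * (n + j).choose k : ℕ) * gadgetCoeff n r k
      = if j = r then 1 else 0 := by
  rcases le_or_gt j r with hjr | hrj
  · have hpos : (0 : ℝ) < (n + j).choose j := mod_cast Nat.choose_pos (Nat.le_add_left j n)
    rw [← Ioc_insert_left hjr, sum_insert left_notMem_Ioc, gadgetCoeff_eq n r j,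
      Nat.choose_self, one_mul, mul_div_cancel₀ _ hpos.ne']
    ring
  · rw [Icc_eq_empty_of_lt hrj, sum_empty, if_neg hrj.ne']

lemma one_add_sum_Ioc_two_pow (j r : ℕ) : 1 + ∑ k ∈ Ioc j r, 2 ^ (r - k) = 2 ^ (r - j) := by
  have hgeom : ∑ i ∈ range (r - j), 2 ^ i + 1 = 2 ^ (r - j) := by
    simpa using geom_sum_mul_add (1 : ℕ) (r - j)
  rw [← Ico_add_one_add_one_eq_Ioc, sum_Ico_eq_sum_range, ← sum_range_reflect,
    show r + 1 - (j + 1) = r - j by omega, ← hgeom, add_comm]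
  refine congrArg (· + 1) (sum_congr rfl fun i hi => congrArg (2 ^ ·) ?_)
  have := mem_range.mp hi
  omega

lemma choose_mul_factorial_le_factorial (n k : ℕ) : n.choose k * k ! ≤ n ! := by
  rcases le_or_gt k n with hkn | hnk
  · rw [← Nat.choose_mul_factorial_mul_factorial hkn]
    exact Nat.le_mul_of_pos_right _ (Nat.factorial_pos _)
  · simp [Nat.choose_eq_zero_of_lt hnk]

lemma abs_gadgetCoeff_le (n r j : ℕ) :
    |gadgetCoeff n r j| ≤ ((2 ^ (r - j) * (r - j)! : ℕ) : ℝ) / ((n + j).choose j : ℕ) := by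
  have hterm : ∀ k ∈ Ioc j r,
      |(((r - j).choose (r - k) * (n + j).choose k : ℕ) : ℝ) * gadgetCoeff n r k|
        ≤ (r - j)! * 2 ^ (r - k) := by
    intro k hk
    obtain ⟨hjk, hkr⟩ := mem_Ioc.mp hk
    have hpos : (0 : ℝ) < (n + k).choose k := mod_cast Nat.choose_pos (Nat.le_add_left k n)
    have hnat : (r - j).choose (r - k) * (n + j).choose k * (2 ^ (r - k) * (r - k)!)
        ≤ (r - j)! * 2 ^ (r - k) * (n + k).choose k :=
      calc _ = (r - j).choose (r - k) * (r - k)! * (n + j).choose k * 2 ^ (r - k) := by ring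
        _ ≤ (r - j)! * (n + k).choose k * 2 ^ (r - k) := by
          gcongr
          exact choose_mul_factorial_le_factorial _ _
        _ = _ := by ring
    rw [abs_mul, Nat.abs_cast]
    calc _ ≤ (((r - j).choose (r - k) * (n + j).choose k : ℕ) : ℝ)
          * (((2 ^ (r - k) * (r - k)! : ℕ) : ℝ) / ((n + k).choose k : ℕ)) :=
          mul_le_mul_of_nonneg_left (abs_gadgetCoeff_le n r k) (Nat.cast_nonneg _)
      _ ≤ _ := by
          rw [mul_div_assoc', div_le_iff₀ hpos]
          exact_mod_cast hnat
  have hdelta : |(if j = r then 1 else 0 : ℝ)| ≤ (r - j)! := by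
    have : (1 : ℝ) ≤ (r - j)! := mod_cast Nat.one_le_iff_ne_zero.mpr (Nat.factorial_ne_zero _)
    split_ifs <;> simp [this]
  rw [gadgetCoeff_eq, abs_div, Nat.abs_cast]
  gcongr
  calc _ ≤ |(if j = r then 1 else 0 : ℝ)| + ∑ k ∈ Ioc j r,
          |(((r - j).choose (r - k) * (n + j).choose k : ℕ) : ℝ) * gadgetCoeff n r k| :=
        (abs_sub _ _).trans (add_le_add le_rfl (abs_sum_le_sum_abs _ _))
    _ ≤ (r - j)! + ∑ k ∈ Ioc j r, ((r - j)! * 2 ^ (r - k) : ℝ) :=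
        add_le_add hdelta (sum_le_sum hterm)
    _ = (r - j)! * ((1 + ∑ k ∈ Ioc j r, 2 ^ (r - k) : ℕ) : ℝ) := by
        push_cast; rw [mul_add, mul_sum, mul_one]
    _ = _ := by rw [one_add_sum_Ioc_two_pow]; push_cast; ring
termination_by r - j
decreasing_by omega

lemma two_pow_mul_factorial_div_choose_le (n r j : ℕ) :
    ((2 ^ (r - j) * (r - j)! : ℕ) : ℝ) / ((n + j).choose j : ℕ)
      ≤ ((2 ^ r * r ! : ℕ) : ℝ) := by
  have hchoose : (1 : ℝ) ≤ ((n + j).choose j : ℕ) :=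
    mod_cast Nat.choose_pos (Nat.le_add_left j n)
  refine (div_le_self (Nat.cast_nonneg _) hchoose).trans ?_
  exact_mod_cast Nat.mul_le_mul (Nat.pow_le_pow_right two_pos (Nat.sub_le r j))
    (Nat.factorial_le (Nat.sub_le r j))

section Subsets

variable {V : Type*} [DecidableEq V]

lemma card_filter_superset_powersetCard {s u : Finset V} (hsu : s ⊆ u) {m : ℕ} (hm : m ≤ #u) :
    #{B ∈ u.powersetCard m | s ⊆ B} = (#u - #s).choose (#u - m) := by
  rw [← card_sdiff_of_subset hsu, ← card_powersetCard]
  refine card_nbij' (u \ ·) (u \ ·) (fun B hB => ?_) (fun C hC => ?_) (fun B hB => ?_)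
    (fun C hC => ?_)
  · simp only [coe_filter, mem_powersetCard, Set.mem_ofPred_eq, mem_coe] at hB ⊢
    exact ⟨sdiff_subset_sdiff subset_rfl hB.2, by rw [card_sdiff_of_subset hB.1.1, hB.1.2]⟩
  · simp only [coe_filter, mem_powersetCard, Set.mem_ofPred_eq, mem_coe] at hC ⊢
    refine ⟨⟨sdiff_subset, ?_⟩, ?_⟩
    · rw [card_sdiff_of_subset (hC.1.trans sdiff_subset), hC.2]
      omega
    · exact subset_sdiff.mpr ⟨hsu, (disjoint_of_subset_left hC.1 sdiff_disjoint).symm⟩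
  · simp only [coe_filter, mem_powersetCard, Set.mem_ofPred_eq] at hB
    exact Finset.sdiff_sdiff_eq_self hB.1.1
  · simp only [mem_coe, mem_powersetCard] at hC
    exact Finset.sdiff_sdiff_eq_self (hC.1.trans sdiff_subset)

lemma inter_union_inter_of_subset_union {s t H : Finset V} (hH : H ⊆ s ∪ t) :
    s ∩ H ∪ t ∩ H = H := by
  rw [← union_inter_distrib_right, inter_eq_right.mpr hH]

lemma inter_union_of_disjoint {s t A B : Finset V} (hst : Disjoint s t) (hA : A ⊆ s)
    (hB : B ⊆ t) : s ∩ (A ∪ B) = A := by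
  rw [inter_union_distrib_left, inter_eq_right.mpr hA,
    disjoint_iff_inter_eq_empty.mp (hst.mono_right hB), union_empty]

lemma card_filter_powersetCard_union {s t u : Finset V} (hst : Disjoint s t) (hu : u ⊆ s ∪ t)
    {m k : ℕ} (hkm : k ≤ m) :
    #{H ∈ (s ∪ t).powersetCard m | u ⊆ H ∧ #(s ∩ H) = k}
      = #{A ∈ s.powersetCard k | s ∩ u ⊆ A}
        * #{B ∈ t.powersetCard (m - k) | t ∩ u ⊆ B} := by
  rw [← card_product]
  refine card_nbij' (fun H => (s ∩ H, t ∩ H)) (fun p => p.1 ∪ p.2)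
    (fun H hH => ?_) (fun p hp => ?_) (fun H hH => ?_) (fun p hp => ?_)
  all_goals simp only [coe_filter, coe_product, mem_powersetCard, Set.mem_ofPred_eq,
    Set.mem_prod] at *
  · obtain ⟨⟨hHst, hHm⟩, huH, hHk⟩ := hH
    have hsplit : #(s ∩ H ∪ t ∩ H) = #(s ∩ H) + #(t ∩ H) :=
      card_union_of_disjoint (hst.mono inter_subset_left inter_subset_left)
    rw [inter_union_inter_of_subset_union hHst, hHm, hHk] at hsplit
    exact ⟨⟨⟨inter_subset_left, hHk⟩, inter_subset_inter_left huH⟩,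
      ⟨inter_subset_left, by omega⟩, inter_subset_inter_left huH⟩
  · obtain ⟨⟨⟨hAs, hAk⟩, huA⟩, ⟨hBt, hBm⟩, huB⟩ := hp
    refine ⟨⟨union_subset_union hAs hBt, ?_⟩, ?_,
      by rw [inter_union_of_disjoint hst hAs hBt, hAk]⟩
    · rw [card_union_of_disjoint (hst.mono hAs hBt), hAk, hBm]
      omega
    · rw [← inter_union_inter_of_subset_union hu]
      exact union_subset_union huA huB
  · exact inter_union_inter_of_subset_union hH.1.1
  · obtain ⟨⟨⟨hAs, -⟩, -⟩, ⟨hBt, -⟩, -⟩ := hp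
    rw [inter_union_of_disjoint hst hAs hBt, union_comm,
      inter_union_of_disjoint hst.symm hBt hAs]

lemma sum_filter_superset_powersetCard_union {M : Type*} [AddCommMonoid M] {s t u : Finset V}
    (hst : Disjoint s t) (hu : u ⊆ s ∪ t) (hs : #s ≤ #t) (f : ℕ → M) :
    ∑ H ∈ ((s ∪ t).powersetCard #t).filter (fun H => u ⊆ H), f #(s ∩ H)
      = ∑ k ∈ Icc #(s ∩ u) #s,
          ((#s - #(s ∩ u)).choose (#s - k) * (#t - #(t ∩ u)).choose k) • f k := by
  have hmaps : ∀ H ∈ ((s ∪ t).powersetCard #t).filter (fun H => u ⊆ H),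
      #(s ∩ H) ∈ Icc #(s ∩ u) #s := fun H hH =>
    mem_Icc.mpr ⟨card_le_card (inter_subset_inter_left (mem_filter.mp hH).2),
      card_le_card inter_subset_left⟩
  rw [← sum_fiberwise_of_maps_to' hmaps]
  refine sum_congr rfl fun k hk => ?_
  have hks := (mem_Icc.mp hk).2
  rw [sum_const, filter_filter, card_filter_powersetCard_union hst hu (hks.trans hs),
    card_filter_superset_powersetCard inter_subset_left hks,
    card_filter_superset_powersetCard inter_subset_left (Nat.sub_le _ _),
    Nat.sub_sub_self (hks.trans hs)]

lemma card_inter_eq_card_iff {s t : Finset V} (h : #t = #s) : #(s ∩ t) = #s ↔ t = s := by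
  refine ⟨fun hst => ?_, fun hts => by rw [hts, inter_self]⟩
  have hsub : s ⊆ t := inter_eq_left.mp (eq_of_subset_of_card_le inter_subset_left hst.ge)
  exact (eq_of_subset_of_card_le hsub h.le).symm

end Subsets

theorem edge_gadget_general {V : Type} [DecidableEq V] (q r : ℕ) (hq : r < q)
    (e J : Finset V) (hd : Disjoint e J) (he : e.card = r) (hJ : J.card = q) :
    ∃ ψ : Finset V → ℝ,
      (∀ e' ∈ (e ∪ J).powersetCard r,
        (∑ H ∈ ((e ∪ J).powersetCard q).filter (fun H => e' ⊆ H), ψ H)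
          = if e' = e then 1 else 0) ∧
      (∀ H ∈ (e ∪ J).powersetCard q,
        |ψ H| ≤ ((2 ^ (r - (e ∩ H).card) * Nat.factorial (r - (e ∩ H).card) : ℕ) : ℝ)
            / (((q - r + (e ∩ H).card).choose ((e ∩ H).card) : ℕ) : ℝ) ∧
        ((2 ^ (r - (e ∩ H).card) * Nat.factorial (r - (e ∩ H).card) : ℕ) : ℝ)
            / (((q - r + (e ∩ H).card).choose ((e ∩ H).card) : ℕ) : ℝ)
          ≤ ((2 ^ r * Nat.factorial r : ℕ) : ℝ)) := by
  subst he hJ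
  refine ⟨fun H => gadgetCoeff (#J - #e) #e #(e ∩ H), fun e' he' => ?_,
    fun H _ => ⟨abs_gadgetCoeff_le _ _ _, two_pow_mul_factorial_div_choose_le _ _ _⟩⟩
  obtain ⟨he'sub, he'card⟩ := mem_powersetCard.mp he'
  have hsplit : #(e ∩ e') + #(J ∩ e') = #e := by
    rw [← card_union_of_disjoint (hd.mono inter_subset_left inter_subset_left),
      inter_union_inter_of_subset_union he'sub, he'card]
  have hJe' : #J - #(J ∩ e') = #J - #e + #(e ∩ e') := by omega
  rw [sum_filter_superset_powersetCard_union hd he'sub hq.le, hJe']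
  simp only [nsmul_eq_mul, sum_choose_mul_gadgetCoeff, card_inter_eq_card_iff he'card]

/-- The edge-gadget of Glock–Kühn–Lo–Osthus: for `q > r ≥ 1` and disjoint sets
`e`, `J` with `|e| = r`, `|J| = q`, there is a weighting `ψ` of the `q`-subsets
of `e ∪ J` such that summing `ψ` over the `q`-subsets containing a given
`r`-subset `e'` of `e ∪ J` gives `1` if `e' = e` and `0` otherwise, and whose
values are bounded by `2^{r-j}·(r-j)! / C(q-r+j, j) ≤ 2^r·r!` where
`j = |e ∩ H|`. -/
theorem edge_gadget {V : Type} [DecidableEq V] (q r : ℕ) (hr : 1 ≤ r) (hq : r < q)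
    (e J : Finset V) (hd : Disjoint e J) (he : e.card = r) (hJ : J.card = q) :
    ∃ ψ : Finset V → ℝ,
      (∀ e' ∈ (e ∪ J).powersetCard r,
        (∑ H ∈ ((e ∪ J).powersetCard q).filter (fun H => e' ⊆ H), ψ H)
          = if e' = e then 1 else 0) ∧
      (∀ H ∈ (e ∪ J).powersetCard q,
        |ψ H| ≤ ((2 ^ (r - (e ∩ H).card) * Nat.factorial (r - (e ∩ H).card) : ℕ) : ℝ)
            / (((q - r + (e ∩ H).card).choose ((e ∩ H).card) : ℕ) : ℝ) ∧
        ((2 ^ (r - (e ∩ H).card) * Nat.factorial (r - (e ∩ H).card) : ℕ) : ℝ)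
            / (((q - r + (e ∩ H).card).choose ((e ∩ H).card) : ℕ) : ℝ)
          ≤ ((2 ^ r * Nat.factorial r : ℕ) : ℝ)) :=
  edge_gadget_general q r hq e J hd he hJ
end
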